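/- arXiv:2106.00852 — 8 statements merged into one kernel-verified Lean document; each statement's English description precedes it below -/
import Mathlib

section
/- Let r ≥ 1 and let M be a finite matroid of rank r that is representable over GF(2) and whose simplification is not the projective geometry PG(r−1,2) (equivalently, the simplification of M has fewer than 2^r − 1 elements). Then 2·g*(M) ≤ |E(M)|, i.e., |E(M)|/g*(M) ≥ 2. -/
open Set
open scoped Classical
set_option synthInstance.maxHeartbeats 1000000
set_option maxHeartbeats 1000000
set_option linter.unusedSectionVars false

section TwoField
variable {F : Type*} [Field F] [Fintype F]

lemma two_field_eq_one (hF : Fintype.card F = 2) {t : F} (ht : t ≠ 0) : t = 1 := by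
  obtain ⟨a, b, hab, huniv⟩ := Finset.card_eq_two.mp
    (show (Finset.univ : Finset F).card = 2 by rw [Finset.card_univ, hF])
  have h0 : (0:F) ∈ ({a,b}:Finset F) := huniv ▸ Finset.mem_univ _
  have h1 : (1:F) ∈ ({a,b}:Finset F) := huniv ▸ Finset.mem_univ _
  have htm : t ∈ ({a,b}:Finset F) := huniv ▸ Finset.mem_univ _
  simp only [Finset.mem_insert, Finset.mem_singleton] at h0 h1 htm
  rcases h0 with rfl|rfl
  · rcases htm with rfl|rfl
    · exact absurd rfl ht
    · rcases h1 with h1|h1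
      · exact absurd h1 one_ne_zero
      · exact h1.symm
  · rcases htm with rfl|rfl
    · rcases h1 with h1|h1
      · exact h1.symm
      · exact absurd h1 one_ne_zero
    · exact absurd rfl ht

lemma two_field_add_self (hF : Fintype.card F = 2) (t : F) : t + t = 0 := by
  rcases eq_or_ne t 0 with rfl|h
  · simp
  · rw [two_field_eq_one hF h]
    by_contra h2
    have := two_field_eq_one hF h2
    exact one_ne_zero (by linear_combination this : (1:F) = 0)

variable {ι : Type*} [Fintype ι]

def dotp (x l : ι → F) : F := ∑ i, l i * x i

lemma dotp_add (x y l : ι → F) : dotp (x + y) l = dotp x l + dotp y l := by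
  simp [dotp, mul_add, Finset.sum_add_distrib]

@[simp] lemma dotp_zero (x : ι → F) : dotp x 0 = 0 := by simp [dotp]

lemma exists_dotp_one_zero (hF : Fintype.card F = 2) [DecidableEq ι] {l l' : ι → F}
    (hl : l ≠ 0) (hne : l ≠ l') : ∃ x, dotp x l = 1 ∧ dotp x l' = 0 := by
  have hδ : ∀ (i₀ : ι) (m : ι → F), dotp (fun i => if i = i₀ then (1:F) else 0) m = m i₀ := by
    intro i₀ m
    simp [dotp, mul_ite, Finset.sum_ite_eq']
  obtain ⟨i₁, hi₁⟩ : ∃ i, l i ≠ l' i := by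
    by_contra h; push_neg at h; exact hne (funext h)
  rcases eq_or_ne (l i₁) 0 with h1|h1
  · -- l i₁ = 0, so l' i₁ ≠ 0, l' i₁ = 1
    have hl'1 : l' i₁ = 1 := two_field_eq_one hF (fun h => hi₁ (h1.trans h.symm))
    obtain ⟨i₂, hi₂⟩ : ∃ i, l i ≠ 0 := by
      by_contra h; push_neg at h; exact hl (funext h)
    have hl2 : l i₂ = 1 := two_field_eq_one hF hi₂
    rcases eq_or_ne (l' i₂) 0 with h2|h2
    · exact ⟨_, by rw [hδ, hl2], by rw [hδ, h2]⟩
    · have hl'2 : l' i₂ = 1 := two_field_eq_one hF h2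
      refine ⟨(fun i => if i = i₁ then (1:F) else 0) + (fun i => if i = i₂ then (1:F) else 0), ?_, ?_⟩
      · rw [dotp_add, hδ, hδ, h1, hl2, zero_add]
      · rw [dotp_add, hδ, hδ, hl'1, hl'2]; exact two_field_add_self hF 1
  · exact ⟨_, by rw [hδ, two_field_eq_one hF h1],
      by rw [hδ]; by_contra h2
         exact hi₁ ((two_field_eq_one hF h1).trans (two_field_eq_one hF h2).symm)⟩

lemma card_dotp_one_ge (hF : Fintype.card F = 2) [DecidableEq ι] {l : ι → F} (hl : l ≠ 0) :
    Fintype.card (ι → F) ≤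
      2 * (Finset.univ.filter (fun x : ι → F => dotp x l = 1)).card := by
  classical
  obtain ⟨x₀, hx₀, -⟩ := exists_dotp_one_zero hF hl hl
  have key : (Finset.univ.filter (fun x : ι → F => ¬ dotp x l = 1)).card ≤
      (Finset.univ.filter (fun x : ι → F => dotp x l = 1)).card := by
    apply Finset.card_le_card_of_injOn (fun x => x + x₀)
    · intro x hx
      simp only [Finset.mem_coe, Finset.mem_filter, Finset.mem_univ, true_and] at hx ⊢
      have h0 : dotp x l = 0 := by
        by_contra h; exact hx (two_field_eq_one hF h)
      rw [dotp_add, h0, hx₀, zero_add]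
    · intro x _ y _ h
      simpa using congrArg (fun z => z + (-x₀)) h
  have := Finset.card_filter_add_card_filter_not
    (s := (Finset.univ : Finset (ι → F))) (p := fun x => dotp x l = 1)
  rw [Finset.card_univ] at this
  omega

lemma card_dotp_pair_le (hF : Fintype.card F = 2) [DecidableEq ι] {l l' : ι → F}
    (hl : l ≠ 0) (hl' : l' ≠ 0) (hne : l ≠ l') :
    4 * (Finset.univ.filter (fun x : ι → F => dotp x l = 1 ∧ dotp x l' = 1)).card ≤
      Fintype.card (ι → F) := by
  classical
  obtain ⟨x₀, hx₀l, hx₀l'⟩ := exists_dotp_one_zero hF hl hne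
  obtain ⟨x₁, hx₁l', hx₁l⟩ := exists_dotp_one_zero hF hl' (Ne.symm hne)
  set Fst := fun (s t : F) => Finset.univ.filter
    (fun x : ι → F => dotp x l = s ∧ dotp x l' = t) with hFst
  have hmem : ∀ (s t : F) x, x ∈ Fst s t ↔ dotp x l = s ∧ dotp x l' = t := by
    intro s t x; simp [hFst]
  have htrans : ∀ (y : ι → F) (s t : F), dotp y l = s → dotp y l' = t →
      (Fst 1 1).card ≤ (Fst (1+s) (1+t)).card := by
    intro y s t hys hyt
    apply Finset.card_le_card_of_injOn (fun x => x + y)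
    · intro x hx
      simp only [Finset.mem_coe] at hx ⊢
      rw [hmem] at hx ⊢
      rw [dotp_add, dotp_add, hx.1, hx.2, hys, hyt]
      exact ⟨rfl, rfl⟩
    · intro x _ z _ h
      simpa using congrArg (fun u => u + (-y)) h
  have h10 : (Fst 1 1).card ≤ (Fst 0 1).card := by
    have := htrans x₀ 1 0 hx₀l hx₀l'
    rwa [two_field_add_self hF 1, add_zero] at this
  have h01 : (Fst 1 1).card ≤ (Fst 1 0).card := by
    have := htrans x₁ 0 1 hx₁l hx₁l'
    rwa [two_field_add_self hF 1, add_zero] at this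
  have h00 : (Fst 1 1).card ≤ (Fst 0 0).card := by
    have := htrans (x₀ + x₁) 1 1 (by rw [dotp_add, hx₀l, hx₁l, add_zero])
      (by rw [dotp_add, hx₀l', hx₁l', zero_add])
    rwa [two_field_add_self hF 1] at this
  have hdisj : ∀ (s t s' t' : F), (s, t) ≠ (s', t') → Disjoint (Fst s t) (Fst s' t') := by
    intro s t s' t' h
    rw [Finset.disjoint_left]
    intro x hx hx'
    rw [hmem] at hx hx'
    exact h (by rw [← hx.1, ← hx.2, hx'.1, hx'.2])
  have h10' : (1:F) ≠ 0 := one_ne_zero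
  have hd1 : Disjoint (Fst 1 1) (Fst 1 0) :=
    hdisj _ _ _ _ (fun h => h10' (congrArg Prod.snd h))
  have hd2 : Disjoint (Fst 1 1 ∪ Fst 1 0) (Fst 0 1) := by
    rw [Finset.disjoint_union_left]
    exact ⟨hdisj _ _ _ _ (fun h => h10' (congrArg Prod.fst h)),
      hdisj _ _ _ _ (fun h => h10' (congrArg Prod.fst h))⟩
  have hd3 : Disjoint (Fst 1 1 ∪ Fst 1 0 ∪ Fst 0 1) (Fst 0 0) := by
    rw [Finset.disjoint_union_left, Finset.disjoint_union_left]
    exact ⟨⟨hdisj _ _ _ _ (fun h => h10' (congrArg Prod.fst h)),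
      hdisj _ _ _ _ (fun h => h10' (congrArg Prod.fst h))⟩,
      hdisj _ _ _ _ (fun h => h10' (congrArg Prod.snd h))⟩
  have hcard : (Fst 1 1).card + (Fst 1 0).card + (Fst 0 1).card + (Fst 0 0).card ≤
      Fintype.card (ι → F) := by
    rw [← Finset.card_union_of_disjoint hd1, ← Finset.card_union_of_disjoint hd2,
      ← Finset.card_union_of_disjoint hd3, ← Finset.card_univ]
    exact Finset.card_le_univ _
  have hgoal : Finset.univ.filter (fun x : ι → F => dotp x l = 1 ∧ dotp x l' = 1) = Fst 1 1 := rfl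
  rw [hgoal]
  omega

end TwoField

section Helpers

lemma restrict_injOn {α F : Type*} [Field F] {n : ℕ} {v : α → Fin n → F} {I : Set α}
    (hli : LinearIndependent F (I.restrict v)) : Set.InjOn v I := by
  intro a ha b hb h
  have := hli.injective (a₁ := ⟨a, ha⟩) (a₂ := ⟨b, hb⟩) h
  exact congrArg Subtype.val this

lemma mem_span_of_dep {α F : Type*} [Field F] {n : ℕ} {v : α → Fin n → F} {I : Set α} {x : α}
    (hli : LinearIndependent F (I.restrict v))
    (hdep : ¬ LinearIndependent F ((insert x I).restrict v)) :
    v x ∈ Submodule.span F (v '' I) := by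
  by_contra hxs
  apply hdep
  have hinj : Set.InjOn v I := restrict_injOn hli
  have hx' : v x ∉ v '' I := fun h => hxs (Submodule.subset_span h)
  have hxI : x ∉ I := fun h => hx' ⟨x, h, rfl⟩
  have hinj2 : Set.InjOn v (insert x I) := by
    intro a ha b hb h
    rcases ha with rfl|ha <;> rcases hb with rfl|hb
    · rfl
    · exact absurd ⟨b, hb, h.symm⟩ hx'
    · exact absurd ⟨a, ha, h⟩ hx'
    · exact hinj ha hb h
  have : LinearIndependent F fun y : ↥(v '' (insert x I)) => (y : Fin n → F) := by
    rw [Set.image_insert_eq]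
    exact (linearIndepOn_id_insert hx').mpr ⟨(linearIndepOn_iff_image hinj).mp hli, hxs⟩
  exact (linearIndepOn_iff_image hinj2).mpr this

lemma exists_minimal_subset {α : Type*} (P : Set α → Prop) :
    ∀ n (X : Set α), X.Finite → X.ncard ≤ n → P X → ∃ C, C ⊆ X ∧ Minimal P C := by
  intro n
  induction n with
  | zero =>
    intro X hX hn hPX
    refine ⟨X, Set.Subset.rfl, hPX, fun Y hY hYX => ?_⟩
    have hX0 : X = ∅ := (Set.ncard_eq_zero hX).mp (Nat.le_zero.mp hn)
    subst hX0
    exact (Set.subset_empty_iff.mp hYX).ge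
  | succ n ih =>
    intro X hX hn hPX
    by_cases h : ∀ Y, P Y → Y ⊆ X → X ⊆ Y
    · exact ⟨X, Set.Subset.rfl, hPX, fun Y hY hYX => h Y hY hYX⟩
    · push_neg at h
      obtain ⟨Y, hPY, hYX, hXY⟩ := h
      have hss : Y ⊂ X := ⟨hYX, hXY⟩
      obtain ⟨C, hCY, hC⟩ := ih Y (hX.subset hYX)
        (by have := Set.ncard_lt_ncard hss hX; omega) hPY
      exact ⟨C, hCY.trans hYX, hC⟩

end Helpers


/-- A cocircuit of a matroid `M` is a circuit of the dual matroid `M✶`,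
i.e. a minimal dependent set of `M✶`. -/
def Matroid.Cocircuit {α : Type*} (M : Matroid α) (C : Set α) : Prop :=
  Minimal (fun X => M✶.Dep X) C

/-- The cogirth of a matroid: the minimum cardinality of a cocircuit. -/
noncomputable def Matroid.cogirth {α : Type*} (M : Matroid α) : ℕ :=
  sInf {n | ∃ C, M.Cocircuit C ∧ C.ncard = n}

/-- A matroid is representable over a field `F` if there is a map from the ground type
to a finite-dimensional `F`-vector space under which independence coincides with
linear independence. -/
def Matroid.IsRepresentableOver {α : Type*} (M : Matroid α) (F : Type*) [Field F] : Prop :=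
  ∃ (n : ℕ) (v : α → (Fin n → F)), ∀ I ⊆ M.E, (M.Indep I ↔ LinearIndependent F (I.restrict v))

/-- The number of elements of the simplification of `M`: the number of distinct
closures of nonloop singletons (i.e. the number of parallel classes of `M`). -/
noncomputable def Matroid.simpNcard {α : Type*} (M : Matroid α) : ℕ :=
  ((fun e => M.closure {e}) '' {e | M.Indep {e}}).ncard

/-- For `r ≥ 1`, if `M` is a finite rank-`r` matroid representable over `GF(2)` whose
simplification is not `PG(r-1,2)` (i.e. has fewer than `2^r - 1` elements), then
`|E(M)| / g*(M) ≥ 2`. -/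
theorem cogirth_binary_not_pg {α : Type*} (M : Matroid α) [M.Finite]
    (r : ℕ) (hr : 1 ≤ r) (hrank : ∃ B, M.IsBase B ∧ B.ncard = r)
    (F : Type*) [Field F] [Fintype F] (hF : Fintype.card F = 2)
    (hrep : M.IsRepresentableOver F)
    (hsimp : M.simpNcard < 2 ^ r - 1) :
    2 * M.cogirth ≤ M.E.ncard := by
  classical
  obtain ⟨n, v, hv⟩ := hrep
  obtain ⟨B, hB, hBr⟩ := hrank
  have hEfin : M.E.Finite := M.ground_finite
  have hBE : B ⊆ M.E := hB.subset_ground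
  have hnonloop_ne : ∀ e, M.Indep {e} → v e ≠ 0 := by
    intro e he
    have hli := (hv {e} he.subset_ground).mp he
    have := hli.ne_zero ⟨e, rfl⟩
    exact this
  have hloop_eq : ∀ e ∈ M.E, ¬ M.Indep {e} → v e = 0 := by
    intro e he hne
    by_contra h0
    apply hne
    refine (hv {e} (by simpa using he)).mpr ?_
    exact linearIndependent_unique_iff.mpr h0
  set S : Set α := {e | M.Indep {e}} with hS
  have hSE : S ⊆ M.E := fun e he => he.subset_ground rfl
  have hSfin : S.Finite := hEfin.subset hSE
  -- rule out r = 1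
  rcases Nat.lt_or_ge r 2 with hr1 | hr2
  · exfalso
    have hr' : r = 1 := by omega
    subst hr'
    obtain ⟨b₀, hb₀⟩ := Set.ncard_eq_one.mp hBr
    have hb₀B : b₀ ∈ B := by rw [hb₀]; exact rfl
    have hind : M.Indep {b₀} := hB.indep.subset (by rw [hb₀])
    have hmem : M.closure {b₀} ∈ (fun e => M.closure {e}) '' S := ⟨b₀, hind, rfl⟩
    have hpos : 0 < M.simpNcard :=
      (Set.ncard_pos (hSfin.image _)).mpr ⟨_, hmem⟩
    simp at hsimp
    omega
  -- main case : r ≥ 2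
  have hBfin : B.Finite := hEfin.subset hBE
  haveI : Fintype ↥B := hBfin.fintype
  have hcardB : Fintype.card ↥B = r := by
    rw [← Nat.card_eq_fintype_card, Nat.card_coe_set_eq, hBr]
  have hliB : LinearIndependent F (B.restrict v) := (hv B hBE).mp hB.indep
  set W : Submodule F (Fin n → F) := Submodule.span F (Set.range (B.restrict v)) with hWdef
  have hspanW : Submodule.span F (v '' B) = W := by rw [Set.image_eq_range]; rfl
  have hspan_base : ∀ B', M.IsBase B' → ∀ e ∈ M.E, v e ∈ Submodule.span F (v '' B') := by
    intro B' hB' e he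
    by_cases heB : e ∈ B'
    · exact Submodule.subset_span ⟨e, heB, rfl⟩
    · have hliB' : LinearIndependent F (B'.restrict v) := (hv B' hB'.subset_ground).mp hB'.indep
      have hdep := hB'.insert_dep ⟨he, heB⟩
      exact mem_span_of_dep hliB'
        (fun h => hdep.not_indep ((hv _ (Set.insert_subset he hB'.subset_ground)).mpr h))
  have hmemW : ∀ e ∈ M.E, v e ∈ W := fun e he => hspanW ▸ hspan_base B hB e he
  set ℬ : Module.Basis ↥B F ↥W := Module.Basis.span hliB with hBasis
  -- parallel elements have equal vectors
  have hpar : ∀ e ∈ S, ∀ e' ∈ S, e' ∈ M.closure {e} → v e' = v e := by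
    intro e he e' he' hcl
    rcases eq_or_ne e' e with rfl|hne
    · rfl
    · have heI : M.Indep {e} := he
      have hdep : M.Dep (insert e' {e}) := by
        rcases (Matroid.Indep.mem_closure_iff heI).mp hcl with h|h
        · exact h
        · exact absurd h hne
      have hli1 : LinearIndependent F (({e}:Set α).restrict v) :=
        (hv {e} (Set.singleton_subset_iff.mpr (hSE he))).mp heI
      have hsp : v e' ∈ Submodule.span F (v '' {e}) :=
        mem_span_of_dep hli1 (fun h => hdep.not_indep ((hv _ hdep.subset_ground).mpr h))
      rw [Set.image_singleton] at hsp
      obtain ⟨cc, hc⟩ := Submodule.mem_span_singleton.mp hsp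
      have hc0 : cc ≠ 0 := by
        rintro rfl
        exact hnonloop_ne e' he' (by simpa using hc.symm)
      rw [two_field_eq_one hF hc0, one_smul] at hc
      exact hc.symm
  -- distinct vectors are at most simpNcard
  set vecs : Set (Fin n → F) := v '' S with hvecs
  have hvecsfin : vecs.Finite := hSfin.image v
  have hvcard : vecs.ncard ≤ M.simpNcard := by
    set g : Set α → (Fin n → F) :=
      fun X => if h : ∃ e, e ∈ X ∧ M.Indep {e} then v h.choose else 0 with hg
    have hsub : vecs ⊆ g '' ((fun e => M.closure {e}) '' S) := by
      rintro _ ⟨e, he, rfl⟩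
      refine ⟨M.closure {e}, ⟨e, he, rfl⟩, ?_⟩
      have hex : ∃ e', e' ∈ M.closure {e} ∧ M.Indep {e'} :=
        ⟨e, M.mem_closure_of_mem' rfl (hSE he), he⟩
      rw [hg]
      simp only
      rw [dif_pos hex]
      exact hpar e he _ hex.choose_spec.2 hex.choose_spec.1
    calc vecs.ncard ≤ (g '' ((fun e => M.closure {e}) '' S)).ncard :=
          Set.ncard_le_ncard hsub ((hSfin.image _).image g)
      _ ≤ ((fun e => M.closure {e}) '' S).ncard := Set.ncard_image_le (hSfin.image _)
  -- cardinality of W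
  haveI : Fintype ↥W := Fintype.ofFinite _
  have hfr : Module.finrank F ↥W = r := by
    rw [hWdef, finrank_span_eq_card hliB, hcardB]
  have hcardW : Fintype.card ↥W = 2 ^ r := by
    rw [Module.card_eq_pow_finrank (K := F) (V := ↥W), hF, hfr]
  have hWncard : ((W : Set (Fin n → F)) \ {0}).ncard = 2 ^ r - 1 := by
    rw [Set.ncard_diff_singleton_of_mem (Submodule.zero_mem W)]
    rw [← Nat.card_coe_set_eq, Nat.card_eq_fintype_card]
    rw [show Fintype.card ↥(W : Set (Fin n → F)) = Fintype.card ↥W from rfl, hcardW]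
  -- find the missing vector w
  have hvW : vecs ⊆ (W : Set (Fin n → F)) \ {0} := by
    rintro _ ⟨e, he, rfl⟩
    exact ⟨hmemW e (hSE he), fun h => hnonloop_ne e he h⟩
  have hlt : vecs.ncard < ((W : Set (Fin n → F)) \ {0}).ncard := by
    rw [hWncard]; exact lt_of_le_of_lt hvcard hsimp
  obtain ⟨w, hwmem, hwvecs⟩ := Set.not_subset.mp
    (fun hsub => absurd (Set.ncard_le_ncard hsub hvecsfin) (not_le.mpr hlt))
  have hwW : w ∈ W := hwmem.1
  have hw0 : w ≠ 0 := fun h => hwmem.2 h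
  have hwne : ∀ e ∈ M.E, v e ≠ w := by
    intro e he h
    by_cases hi : M.Indep {e}
    · exact hwvecs ⟨e, hi, h⟩
    · exact hw0 (h ▸ hloop_eq e he hi)
  -- coordinates
  set m : α → ↥W := fun e => if h : v e ∈ W then (⟨v e, h⟩ : ↥W) else 0 with hm
  have hmE : ∀ e ∈ M.E, (m e : Fin n → F) = v e := by
    intro e he; rw [hm]; simp only [dif_pos (hmemW e he)]
  set wW : ↥W := ⟨w, hwW⟩ with hwWdef
  set a : ↥B → F := ⇑(ℬ.repr wW) with ha
  set c : α → (↥B → F) := fun e => ⇑(ℬ.repr (m e)) with hc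
  have hane : a ≠ 0 := by
    intro h
    have h1 : ℬ.repr wW = 0 := Finsupp.coe_eq_zero.mp h
    have h2 : wW = 0 := by
      rwa [LinearEquiv.map_eq_zero_iff] at h1
    exact hw0 (congrArg Subtype.val h2)
  have hcne : ∀ e ∈ M.E, M.Indep {e} → c e ≠ 0 ∧ c e ≠ a := by
    intro e he hi
    constructor
    · intro h
      have h1 : ℬ.repr (m e) = 0 := Finsupp.coe_eq_zero.mp h
      rw [LinearEquiv.map_eq_zero_iff] at h1
      have : v e = 0 := by rw [← hmE e he, h1]; rfl
      exact hnonloop_ne e hi this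
    · intro h
      have h1 : ℬ.repr (m e) = ℬ.repr wW := DFunLike.coe_injective h
      have h2 : m e = wW := ℬ.repr.injective h1
      have : v e = w := by rw [← hmE e he, h2]
      exact hwne e he this
  -- the linear functional associated with x
  have hφ : ∀ x : ↥B → F, ∃ φ : ↥W →ₗ[F] F, ∀ u : ↥W, φ u = dotp x ⇑(ℬ.repr u) := by
    intro x
    refine ⟨(Finsupp.linearCombination F x).comp
      (ℬ.repr : ↥W ≃ₗ[F] (↥B →₀ F)).toLinearMap, fun u => ?_⟩
    rw [LinearMap.comp_apply, LinearEquiv.coe_coe, Finsupp.linearCombination_apply,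
      Finsupp.sum_fintype]
    · simp [dotp, mul_comm]
    · intro i; exact zero_smul F (x i)
  -- the counting
  set Efin : Finset α := hEfin.toFinset with hEf
  set Cx : (↥B → F) → Finset α := fun x => Efin.filter (fun e => dotp x (c e) = 1) with hCx
  set A : Finset (↥B → F) := Finset.univ.filter (fun x => dotp x a = 1) with hA
  have hcardV : Fintype.card (↥B → F) = 2 ^ r := by
    rw [Fintype.card_fun, hF, hcardB]
  have hAcard : 2 ^ (r-1) ≤ A.card := by
    have h1 := card_dotp_one_ge hF hane
    rw [hcardV] at h1
    rw [← hA] at h1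
    have h2 : 2 * 2 ^ (r - 1) = 2 ^ r := by
      rw [mul_comm, ← pow_succ]; congr 1; omega
    omega
  have hsum : ∑ x ∈ A, (Cx x).card ≤ 2 ^ (r - 2) * Efin.card := by
    have hswap : ∑ x ∈ A, (Cx x).card =
        ∑ e ∈ Efin, (A.filter (fun x => dotp x (c e) = 1)).card := by
      simp only [hCx, Finset.card_filter]
      exact Finset.sum_comm
    rw [hswap]
    have hbound : ∀ e ∈ Efin, (A.filter (fun x => dotp x (c e) = 1)).card ≤ 2 ^ (r - 2) := by
      intro e he
      have heE : e ∈ M.E := hEfin.mem_toFinset.mp he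
      by_cases hi : M.Indep {e}
      · obtain ⟨hc0, hca⟩ := hcne e heE hi
        have h4 := card_dotp_pair_le hF hane hc0 (Ne.symm hca)
        rw [hcardV] at h4
        have hff : A.filter (fun x => dotp x (c e) = 1) =
            Finset.univ.filter (fun x : ↥B → F => dotp x a = 1 ∧ dotp x (c e) = 1) := by
          rw [hA, Finset.filter_filter]
        rw [hff]
        have h2 : (2:ℕ) ^ (r-2) * 4 = 2 ^ r := by
          rw [show (4:ℕ) = 2^2 from rfl, ← pow_add]
          congr 1
          omega
        omega
      · have hce : c e = 0 := by
          have hv0 : v e = 0 := hloop_eq e heE hi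
          have hm0 : m e = 0 := by
            apply Subtype.ext
            rw [hmE e heE, hv0]; rfl
          rw [hc]
          show ⇑(ℬ.repr (m e)) = 0
          rw [hm0, map_zero, Finsupp.coe_zero]
        have : A.filter (fun x => dotp x (c e) = 1) = ∅ := by
          apply Finset.filter_false_of_mem
          intro x _
          rw [hce, dotp_zero]
          exact zero_ne_one
        rw [this]
        simp
    calc ∑ e ∈ Efin, (A.filter (fun x => dotp x (c e) = 1)).card
        ≤ ∑ _e ∈ Efin, 2 ^ (r-2) := Finset.sum_le_sum hbound
      _ = 2 ^ (r-2) * Efin.card := by rw [Finset.sum_const, smul_eq_mul, mul_comm]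
  -- pick a good functional
  obtain ⟨x, hxA, hxmin⟩ : ∃ x ∈ A, 2 * (Cx x).card ≤ Efin.card := by
    by_contra hcon
    push_neg at hcon
    have h1 : A.card * (Efin.card + 1) ≤ ∑ x ∈ A, 2 * (Cx x).card := by
      calc A.card * (Efin.card+1) = ∑ _x ∈ A, (Efin.card+1) := by
            rw [Finset.sum_const, smul_eq_mul, mul_comm]
        _ ≤ _ := Finset.sum_le_sum (fun x hx => hcon x hx)
    have h2 : ∑ x ∈ A, 2 * (Cx x).card = 2 * ∑ x ∈ A, (Cx x).card := by
      rw [Finset.mul_sum]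
    have h3 : 2 * (2 ^ (r-2) * Efin.card) = 2 ^ (r-1) * Efin.card := by
      rw [← mul_assoc]
      congr 1
      rw [mul_comm, ← pow_succ]
      congr 1; omega
    have h4 : 2 ^ (r-1) * Efin.card ≤ A.card * Efin.card :=
      Nat.mul_le_mul_right _ hAcard
    have hchain : A.card * Efin.card + A.card ≤ A.card * Efin.card := by
      calc A.card * Efin.card + A.card = A.card * (Efin.card + 1) := by ring
        _ ≤ ∑ x ∈ A, 2 * (Cx x).card := h1
        _ = 2 * ∑ x ∈ A, (Cx x).card := h2
        _ ≤ 2 * (2 ^ (r-2) * Efin.card) := by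
            exact Nat.mul_le_mul_left _ hsum
        _ = 2 ^ (r-1) * Efin.card := h3
        _ ≤ A.card * Efin.card := h4
    have hA0 : A.card = 0 := by
      have := Nat.le_of_add_le_add_left (a := A.card * Efin.card)
        (by simpa using hchain : A.card * Efin.card + A.card ≤ A.card * Efin.card + 0)
      omega
    have : (0:ℕ) < 2 ^ (r-1) := Nat.pow_pos (by norm_num)
    omega
  -- the chosen set is codependent
  set X : Set α := ↑(Cx x) with hXdef
  have hXE : X ⊆ M.E := by
    intro e he
    exact hEfin.mem_toFinset.mp (Finset.mem_of_mem_filter e he)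
  have hXdep : M✶.Dep X := by
    rw [Matroid.dep_iff]
    refine ⟨?_, by rwa [Matroid.dual_ground]⟩
    intro hXi
    obtain ⟨-, B', hB', hdisj⟩ := Matroid.dual_indep_iff_exists'.mp hXi
    obtain ⟨φ, hφx⟩ := hφ x
    have hzero : ∀ e ∈ B', φ (m e) = 0 := by
      intro e he
      have heE : e ∈ M.E := hB'.subset_ground he
      have heX : e ∉ Cx x := fun hmem => (Set.disjoint_left.mp hdisj hmem) he
      have h1 : ¬ dotp x (c e) = 1 :=
        fun h1 => heX (Finset.mem_filter.mpr ⟨hEfin.mem_toFinset.mpr heE, h1⟩)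
      have h0 : dotp x (c e) = 0 := by
        by_contra h0; exact h1 (two_field_eq_one hF h0)
      rw [hφx (m e)]
      exact h0
    have hwspan : w ∈ Submodule.span F (v '' B') := by
      have hsub : v '' B ⊆ (Submodule.span F (v '' B') : Set (Fin n → F)) := by
        rintro _ ⟨b, hb, rfl⟩; exact hspan_base B' hB' b (hBE hb)
      have hle : W ≤ Submodule.span F (v '' B') := by
        rw [← hspanW]; exact Submodule.span_le.mpr hsub
      exact hle hwW
    have hwspan2 : wW ∈ Submodule.span F (m '' B') := by
      have himg : W.subtype '' (m '' B') = v '' B' := by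
        rw [Set.image_image]
        exact Set.image_congr (fun e he => hmE e (hB'.subset_ground he))
      have hmap : Submodule.map W.subtype (Submodule.span F (m '' B')) =
          Submodule.span F (v '' B') := by
        rw [Submodule.map_span, himg]
      rw [← hmap] at hwspan
      obtain ⟨y, hy, hyw⟩ := hwspan
      have hywW : y = wW := Subtype.ext hyw
      rwa [← hywW]
    have hφw0 : φ wW = 0 := by
      have hker : Submodule.span F (m '' B') ≤ LinearMap.ker φ := by
        rw [Submodule.span_le]
        rintro _ ⟨e, he, rfl⟩
        exact LinearMap.mem_ker.mpr (hzero e he)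
      exact LinearMap.mem_ker.mp (hker hwspan2)
    have hφw1 : φ wW = 1 := by
      rw [hφx wW]
      exact (Finset.mem_filter.mp hxA).2
    rw [hφw0] at hφw1
    exact one_ne_zero hφw1.symm
  -- extract a cocircuit and finish
  obtain ⟨C, hCX, hCmin⟩ := exists_minimal_subset (fun Y => M✶.Dep Y) X.ncard X
    (Cx x).finite_toSet le_rfl hXdep
  have hcog : M.cogirth ≤ C.ncard := Nat.sInf_le ⟨C, hCmin, rfl⟩
  have hCle : C.ncard ≤ X.ncard := Set.ncard_le_ncard hCX (Cx x).finite_toSet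
  have hXcard : X.ncard = (Cx x).card := Set.ncard_coe_finset _
  have hEcard : M.E.ncard = Efin.card := Set.ncard_eq_toFinset_card _ hEfin
  omega
end

section
/- Let q be a prime power, let r ≥ 1, and let M be a finite matroid of rank r that is representable over GF(q) and whose simplification is not the projective geometry PG(r−1,q) (equivalently, the simplification of M has fewer than (q^r − 1)/(q − 1) elements). Then (q − 1)·|E(M)| ≥ q·g*(M), i.e., |E(M)|/g*(M) ≥ q/(q−1). -/
open Set

set_option linter.unusedSectionVars false
set_option maxHeartbeats 1000000

section Helpers

variable {F : Type*} [Field F] [Fintype F]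

private lemma card_module_eq (W : Type*) [AddCommGroup W] [Module F W] [Finite W] :
    Nat.card W = Fintype.card F ^ Module.finrank F W := by
  have := Fintype.ofFinite W
  rw [Nat.card_eq_fintype_card, Module.card_eq_pow_finrank (K := F) (V := W)]

private lemma fiber_card {D Z : Type*} [AddCommGroup D] [Module F D] [Finite D]
    [AddCommGroup Z] [Module F Z] [FiniteDimensional F D]
    (L : D →ₗ[F] Z) (hL : Function.Surjective L) (z : Z) :
    Nat.card {d : D // L d = z}
      = Fintype.card F ^ (Module.finrank F D - Module.finrank F Z) := by
  obtain ⟨d₀, hd₀⟩ := hL z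
  have e : {d : D // L d = z} ≃ LinearMap.ker L :=
    { toFun := fun d => ⟨d.1 - d₀, by simp [LinearMap.mem_ker, map_sub, d.2, hd₀]⟩
      invFun := fun k => ⟨d₀ + k.1, by
        have hk := k.2
        rw [LinearMap.mem_ker] at hk
        simp [map_add, hk, hd₀]⟩
      left_inv := fun d => by ext; simp
      right_inv := fun k => by ext; simp }
  rw [Nat.card_congr e, card_module_eq (F := F)]
  congr 1
  have h1 := LinearMap.finrank_range_add_finrank_ker L
  rw [LinearMap.range_eq_top.2 hL, finrank_top] at h1
  omega

private lemma exists_dual_one_zero {V : Type*} [AddCommGroup V] [Module F V]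
    {x y : V} (hx : x ∉ Submodule.span F {y}) :
    ∃ φ : V →ₗ[F] F, φ x = 1 ∧ φ y = 0 := by
  obtain ⟨f, hfx, hfy⟩ :=
    (Submodule.span F {y}).exists_dual_map_eq_bot_of_notMem hx inferInstance
  have hy0 : f y = 0 := by
    have h : f y ∈ (Submodule.span F {y}).map f :=
      Submodule.mem_map_of_mem (Submodule.mem_span_singleton_self y)
    rw [hfy] at h
    simpa using h
  refine ⟨(f x)⁻¹ • f, ?_, ?_⟩
  · simp [inv_mul_cancel₀ hfx]
  · simp [hy0]

private lemma ncard_biUnion_le' {ι β : Type*} [Finite β] {S : Set ι} (hS : S.Finite)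
    (t : ι → Set β) (k : ℕ) (hk : ∀ i ∈ S, (t i).ncard ≤ k) :
    (⋃ i ∈ S, t i).ncard ≤ S.ncard * k := by
  refine Set.Finite.induction_on
    (motive := fun S' _ => (∀ i ∈ S', (t i).ncard ≤ k) →
      (⋃ i ∈ S', t i).ncard ≤ S'.ncard * k) S hS (by simp) ?_ hk
  intro a s ha hs ih hk'
  rw [Set.biUnion_insert, Set.ncard_insert_of_notMem ha hs]
  have h2 := ih (fun i hi => hk' i (Set.mem_insert_of_mem a hi))
  have h3 := hk' a (Set.mem_insert a s)
  calc (t a ∪ ⋃ i ∈ s, t i).ncard ≤ (t a).ncard + (⋃ i ∈ s, t i).ncard :=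
        Set.ncard_union_le _ _
    _ ≤ k + s.ncard * k := Nat.add_le_add h3 h2
    _ = (s.ncard + 1) * k := by ring

end Helpers

/-- For a prime power `q` and `r ≥ 1`, if `M` is a finite rank-`r` matroid representable
over `GF(q)` whose simplification is not `PG(r-1,q)` (i.e. has fewer than
`(q^r - 1)/(q - 1)` elements), then `|E(M)| / g*(M) ≥ q/(q-1)`. -/
theorem cogirth_gf_q_not_pg {α : Type*} (M : Matroid α) [M.Finite]
    (q r : ℕ) (hr : 1 ≤ r) (hrank : ∃ B, M.IsBase B ∧ B.ncard = r)
    (F : Type*) [Field F] [Fintype F] (hF : Fintype.card F = q)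
    (hrep : M.IsRepresentableOver F)
    (hsimp : (q - 1) * M.simpNcard < q ^ r - 1) :
    q * M.cogirth ≤ (q - 1) * M.E.ncard := by
  classical
  obtain ⟨n, v, hv⟩ := hrep
  obtain ⟨B, hB, hBcard⟩ := hrank
  have hq2 : 2 ≤ q := by rw [← hF]; exact Fintype.one_lt_card
  have hE : M.E.Finite := M.ground_finite
  have hBE : B ⊆ M.E := hB.subset_ground
  have hBfin : B.Finite := hE.subset hBE
  -- nonloops have nonzero vectors and vice versa
  have hne : ∀ e ∈ M.E, M.Indep {e} → v e ≠ 0 := by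
    intro e he hi
    have hli := (hv {e} (by simpa using he)).1 hi
    exact hli.ne_zero ⟨e, rfl⟩
  have hsing : ∀ e ∈ M.E, v e ≠ 0 → M.Indep {e} := by
    intro e he h0
    refine (hv {e} (by simpa using he)).2 ?_
    exact (linearIndepOn_singleton_iff F).2 h0
  -- pair independence
  have hpair : ∀ e ∈ M.E, ∀ f ∈ M.E, v e ≠ 0 → v f ∉ Submodule.span F {v e} →
      M.Indep {f, e} := by
    intro e he f hf he0 hspan
    have hfe : v f ≠ v e := fun h => hspan (h ▸ Submodule.mem_span_singleton_self _)
    have h1 : LinearIndependent F ((↑) : ↥({v e} : Set (Fin n → F)) → (Fin n → F)) :=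
      (linearIndepOn_singleton_iff F (v := id)).2 he0
    have h2 := LinearIndepOn.insert (v := id) h1 (x := v f) (by simpa using hspan)
    have hinj : Set.InjOn v ({f, e} : Set α) := by
      intro a ha b hb hab
      simp only [Set.mem_insert_iff, Set.mem_singleton_iff] at ha hb
      rcases ha with rfl | rfl <;> rcases hb with rfl | rfl <;>
        first
          | rfl
          | exact absurd hab hfe
          | exact absurd hab.symm hfe
    have h3 : LinearIndependent F (({f, e} : Set α).restrict v) := by
      exact (linearIndepOn_iff_image hinj).2 (by rw [Set.image_pair]; exact h2)
    exact (hv {f, e} (by rw [Set.insert_subset_iff]; exact ⟨hf, by simpa using he⟩)).2 h3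
  -- span of closure of a point
  have hclspan : ∀ e, M.Indep {e} →
      Submodule.span F (v '' M.closure {e}) = Submodule.span F {v e} := by
    intro e hi
    have he : e ∈ M.E := by simpa using hi.subset_ground
    have he0 := hne e he hi
    apply le_antisymm
    · rw [Submodule.span_le]
      rintro x ⟨f, hfcl, rfl⟩
      by_contra hx
      have hfE : f ∈ M.E := M.closure_subset_ground {e} hfcl
      have hfe : f ≠ e := by
        rintro rfl; exact hx (Submodule.subset_span rfl)
      have hind := hpair e he f hfE he0 hx
      have hnotin : f ∉ M.closure {e} := by
        rw [hi.notMem_closure_iff_of_notMem (by simpa using hfe) hfE]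
        exact hind
      exact hnotin hfcl
    · rw [Submodule.span_le]
      rintro x rfl
      exact Submodule.subset_span ⟨e, M.mem_closure_self e he, rfl⟩
  -- the span of the ground set and its rank
  set W := Submodule.span F (v '' M.E) with hWdef
  have hliB : LinearIndependent F (B.restrict v) := (hv B hBE).1 hB.indep
  haveI : Fintype ↥B := hBfin.fintype
  have hrW : r ≤ Module.finrank F W := by
    have h1 : Module.finrank F ↥(Submodule.span F (Set.range (B.restrict v)))
        = Fintype.card ↥B := finrank_span_eq_card hliB
    rw [show Set.range (B.restrict v) = v '' B from (Set.image_eq_range v B).symm] at h1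
    have hcard : Fintype.card ↥B = r := by
      rw [← hBcard, ← Nat.card_coe_set_eq, Nat.card_eq_fintype_card]
    have hle : Submodule.span F (v '' B) ≤ W :=
      Submodule.span_mono (Set.image_mono hBE)
    calc r = Fintype.card ↥B := hcard.symm
      _ = Module.finrank F ↥(Submodule.span F (v '' B)) := h1.symm
      _ ≤ Module.finrank F ↥W := Submodule.finrank_mono hle
  -- simpNcard ≥ 1
  have hsetfin : ({e | M.Indep {e}} : Set α).Finite :=
    hE.subset (fun e (he : M.Indep {e}) => by simpa using he.subset_ground)
  have hA : ((fun e => M.closure {e}) '' {e | M.Indep {e}}).Finite := hsetfin.image _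
  have hs1 : 1 ≤ M.simpNcard := by
    have hBne : B.Nonempty := by
      apply Set.nonempty_of_ncard_ne_zero
      rw [hBcard]; omega
    obtain ⟨b, hb⟩ := hBne
    have hib : M.Indep {b} := hB.indep.subset (by simpa using hb)
    have hmem : M.closure {b} ∈ (fun e => M.closure {e}) '' {e | M.Indep {e}} :=
      ⟨b, hib, rfl⟩
    exact (Set.ncard_pos hA).2 ⟨_, hmem⟩
  have hr2 : 2 ≤ r := by
    by_contra h
    have hr1 : r = 1 := by omega
    rw [hr1, pow_one] at hsimp
    have hgt : q - 1 ≤ (q - 1) * M.simpNcard := Nat.le_mul_of_pos_right _ (by omega)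
    exact absurd (lt_of_le_of_lt hgt hsimp) (lt_irrefl _)
  have hVn : Module.finrank F (Fin n → F) = n := by
    simp [Module.finrank_pi]
  have hn2 : 2 ≤ n := by
    have h := W.finrank_le
    rw [hVn] at h
    exact le_trans hr2 (le_trans hrW h)
  -- existence of a projective point not used by M
  have hwex : ∃ w, w ∈ W ∧ w ≠ 0 ∧ ∀ e ∈ M.E, w ∉ Submodule.span F {v e} := by
    by_contra hcon
    push_neg at hcon
    set S := (fun e => Submodule.span F {v e}) '' {e | M.Indep {e}} with hSdef
    have hSA : S = (fun X => Submodule.span F (v '' X)) ''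
        ((fun e => M.closure {e}) '' {e | M.Indep {e}}) := by
      rw [Set.image_image]
      exact Set.image_congr (fun e he => (hclspan e he).symm)
    have hScard : S.ncard ≤ M.simpNcard := by
      rw [hSA]; exact Set.ncard_image_le hA
    have hSfin : S.Finite := hsetfin.image _
    have hcover : ((W : Set (Fin n → F)) \ {0}) ⊆
        ⋃ p ∈ S, ((p : Set (Fin n → F)) \ {0}) := by
      intro w hw
      obtain ⟨hwW, hw0⟩ := hw
      have hw0' : w ≠ 0 := by simpa using hw0
      obtain ⟨e, heE, hwe⟩ := hcon w hwW hw0'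
      have hv0 : v e ≠ 0 := by
        rintro h
        rw [h, Submodule.span_zero_singleton] at hwe
        exact hw0' (by simpa using hwe)
      have hie : M.Indep {e} := hsing e heE hv0
      exact Set.mem_biUnion ⟨e, hie, rfl⟩ ⟨hwe, hw0⟩
    have hcount : ((W : Set (Fin n → F)) \ {0}).ncard ≤ S.ncard * (q - 1) := by
      refine le_trans (Set.ncard_le_ncard hcover (Set.toFinite _))
        (ncard_biUnion_le' hSfin _ _ ?_)
      rintro p ⟨e, hie, rfl⟩
      have he : e ∈ M.E := by simpa using hie.subset_ground
      have hv0 := hne e he hie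
      have hcardp : ((Submodule.span F {v e} : Submodule F (Fin n → F)) :
          Set (Fin n → F)).ncard = q := by
        rw [← Nat.card_coe_set_eq]
        have h : Nat.card ↥(Submodule.span F {v e} : Submodule F (Fin n → F)) = q := by
          rw [card_module_eq (F := F), finrank_span_singleton hv0, pow_one, hF]
        exact h
      rw [Set.ncard_diff_singleton_of_mem (by simp : (0 : Fin n → F) ∈ _),
        hcardp]
    have hWcard : ((W : Set (Fin n → F)) \ {0}).ncard = q ^ Module.finrank F W - 1 := by
      rw [Set.ncard_diff_singleton_of_mem (by simp : (0 : Fin n → F) ∈ _),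
        ← Nat.card_coe_set_eq]
      have h : Nat.card ↥W = q ^ Module.finrank F W := by
        rw [card_module_eq (F := F), hF]
      rw [show Nat.card ↥(W : Set (Fin n → F)) = Nat.card ↥W from rfl, h]
    have hge : q ^ r ≤ q ^ Module.finrank F W :=
      Nat.pow_le_pow_right (by omega) hrW
    have hmul : S.ncard * (q - 1) ≤ (q - 1) * M.simpNcard := by
      rw [Nat.mul_comm]
      exact Nat.mul_le_mul_left _ hScard
    have hchain : q ^ r - 1 < q ^ r - 1 := by
      calc q ^ r - 1 ≤ q ^ Module.finrank F ↥W - 1 := Nat.sub_le_sub_right hge 1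
        _ = ((W : Set (Fin n → F)) \ {0}).ncard := hWcard.symm
        _ ≤ S.ncard * (q - 1) := hcount
        _ ≤ (q - 1) * M.simpNcard := hmul
        _ < q ^ r - 1 := hsimp
    exact absurd hchain (lt_irrefl _)
  obtain ⟨w, hwW, hw0, hwns⟩ := hwex
  -- functional counting
  haveI : Finite ((Fin n → F) →ₗ[F] F) := Finite.of_injective _ DFunLike.coe_injective
  haveI : Fintype ((Fin n → F) →ₗ[F] F) := Fintype.ofFinite _
  have hfinΦ : Module.finrank F ((Fin n → F) →ₗ[F] F) = n :=
    (Subspace.dual_finrank_eq (K := F) (V := Fin n → F)).trans hVn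
  obtain ⟨φ₀, hφ₀, -⟩ := exists_dual_one_zero (F := F) (x := w) (y := (0 : Fin n → F))
    (by rw [Submodule.span_zero_singleton]; simpa using hw0)
  have hsurj1 : Function.Surjective (Module.Dual.eval F (Fin n → F) w) := by
    intro t
    exact ⟨t • φ₀, by simp [Module.Dual.eval_apply, hφ₀]⟩
  have hTcard : Nat.card {ψ : (Fin n → F) →ₗ[F] F // ψ w = 1} = q ^ (n - 1) := by
    have h := fiber_card (F := F) (Module.Dual.eval F (Fin n → F) w) hsurj1 (1 : F)
    have heq : Nat.card {d : (Fin n → F) →ₗ[F] F // Module.Dual.eval F (Fin n → F) w d = 1}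
        = Nat.card {ψ : (Fin n → F) →ₗ[F] F // ψ w = 1} :=
      Nat.card_congr (Equiv.subtypeEquivRight (fun ψ => by simp [Module.Dual.eval_apply]))
    rw [← heq, h, hfinΦ, Module.finrank_self, hF]
  set T : Finset ((Fin n → F) →ₗ[F] F) := Finset.univ.filter (fun ψ => ψ w = 1) with hTdef
  set EF : Finset α := hE.toFinset with hEFdef
  have hT : T.card = q ^ (n - 1) := by
    rw [hTdef, ← hTcard, Nat.card_eq_fintype_card, Fintype.card_subtype]
  have key : ∀ e ∈ M.E, q ^ (n - 2) ≤ (T.filter (fun ψ => ψ (v e) = 0)).card := by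
    intro e he
    have hfc : (T.filter (fun ψ => ψ (v e) = 0)).card
        = Nat.card {ψ : (Fin n → F) →ₗ[F] F // ψ w = 1 ∧ ψ (v e) = 0} := by
      rw [hTdef, Finset.filter_filter, Nat.card_eq_fintype_card, Fintype.card_subtype]
    by_cases h0 : v e = 0
    · have hcc : Nat.card {ψ : (Fin n → F) →ₗ[F] F // ψ w = 1 ∧ ψ (v e) = 0}
          = q ^ (n - 1) := by
        rw [← hTcard]
        exact Nat.card_congr (Equiv.subtypeEquivRight (fun ψ => by simp [h0]))
      rw [hfc, hcc]
      exact Nat.pow_le_pow_right (by omega) (by omega)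
    · have hwx : w ∉ Submodule.span F {v e} := hwns e he
      have hxw : v e ∉ Submodule.span F {w} := by
        intro hmem
        rw [Submodule.mem_span_singleton] at hmem
        obtain ⟨c, hc⟩ := hmem
        have hc0 : c ≠ 0 := by rintro rfl; rw [← hc] at h0; simp at h0
        apply hwx
        rw [Submodule.mem_span_singleton]
        exact ⟨c⁻¹, by rw [← hc, smul_smul, inv_mul_cancel₀ hc0, one_smul]⟩
      obtain ⟨φ₁, hφ₁w, hφ₁x⟩ := exists_dual_one_zero (F := F) hwx
      obtain ⟨φ₂, hφ₂x, hφ₂w⟩ := exists_dual_one_zero (F := F) hxw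
      set L : ((Fin n → F) →ₗ[F] F) →ₗ[F] F × F :=
        (Module.Dual.eval F (Fin n → F) w).prod (Module.Dual.eval F (Fin n → F) (v e))
        with hLdef
      have hLsurj : Function.Surjective L := by
        rintro ⟨s, t⟩
        refine ⟨s • φ₁ + t • φ₂, ?_⟩
        simp [hLdef, LinearMap.prod_apply, Module.Dual.eval_apply, hφ₁w, hφ₁x, hφ₂w, hφ₂x,
          Prod.ext_iff]
      have h := fiber_card (F := F) L hLsurj ((1 : F), (0 : F))
      have heq : Nat.card {d : (Fin n → F) →ₗ[F] F // L d = (1, 0)}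
          = Nat.card {ψ : (Fin n → F) →ₗ[F] F // ψ w = 1 ∧ ψ (v e) = 0} :=
        Nat.card_congr (Equiv.subtypeEquivRight (fun ψ => by
          simp [hLdef, LinearMap.prod_apply, Module.Dual.eval_apply, Prod.ext_iff]))
      have hfr2 : Module.finrank F (F × F) = 2 := by
        simp [Module.finrank_prod]
      rw [hfc, ← heq, h, hfinΦ, hfr2, hF]
  -- double counting
  have hswap : ∑ ψ ∈ T, (EF.filter (fun e => ψ (v e) = 0)).card
      = ∑ e ∈ EF, (T.filter (fun ψ => ψ (v e) = 0)).card := by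
    simp_rw [Finset.card_filter]
    rw [Finset.sum_comm]
  have hlow : EF.card * q ^ (n - 2) ≤
      ∑ ψ ∈ T, (EF.filter (fun e => ψ (v e) = 0)).card := by
    rw [hswap]
    calc EF.card * q ^ (n - 2) = ∑ _e ∈ EF, q ^ (n - 2) := by
          rw [Finset.sum_const, smul_eq_mul]
      _ ≤ ∑ e ∈ EF, (T.filter (fun ψ => ψ (v e) = 0)).card :=
          Finset.sum_le_sum (fun e heEF => key e (by
            rw [hEFdef] at heEF; exact hE.mem_toFinset.1 heEF))
  have hTne : T.Nonempty := by
    rw [← Finset.card_pos, hT]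
    exact Nat.pow_pos (by omega)
  obtain ⟨φ, hφT, hφmax⟩ :=
    T.exists_max_image (fun ψ => (EF.filter (fun e => ψ (v e) = 0)).card) hTne
  set t : ℕ := (EF.filter (fun e => φ (v e) = 0)).card with htdef
  have hmax : EF.card * q ^ (n - 2) ≤ q ^ (n - 1) * t := by
    calc EF.card * q ^ (n - 2)
        ≤ ∑ ψ ∈ T, (EF.filter (fun e => ψ (v e) = 0)).card := hlow
      _ ≤ ∑ _ψ ∈ T, t := Finset.sum_le_sum (fun ψ hψ => hφmax ψ hψ)
      _ = T.card * t := by rw [Finset.sum_const, smul_eq_mul]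
      _ = q ^ (n - 1) * t := by rw [hT]
  have hqt : EF.card ≤ q * t := by
    have h' : q ^ (n - 2) * EF.card ≤ q ^ (n - 2) * (q * t) := by
      calc q ^ (n - 2) * EF.card = EF.card * q ^ (n - 2) := Nat.mul_comm _ _
        _ ≤ q ^ (n - 1) * t := hmax
        _ = q ^ (n - 2) * (q * t) := by
            rw [show n - 1 = (n - 2) + 1 by omega, pow_succ]; ring
    exact Nat.le_of_mul_le_mul_left h' (Nat.pow_pos (by omega))
  set CF : Finset α := EF.filter (fun e => ¬ (φ (v e) = 0)) with hCFdef
  have hCt : t + CF.card = EF.card := by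
    rw [htdef, hCFdef]
    exact Finset.card_filter_add_card_filter_not _
  set C : Set α := (↑CF : Set α) with hCdef
  have hCE : C ⊆ M.E := by
    intro e he
    rw [hCdef, Finset.mem_coe, hCFdef, Finset.mem_filter] at he
    exact hE.mem_toFinset.1 (by rw [← hEFdef]; exact he.1)
  have hφ1 : φ w = 1 := by
    rw [hTdef] at hφT
    exact (Finset.mem_filter.1 hφT).2
  -- C is dependent in the dual matroid
  have hCdep : M✶.Dep C := by
    rw [Matroid.dep_iff]
    refine ⟨?_, by rwa [Matroid.dual_ground]⟩
    intro hCi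
    obtain ⟨-, B', hB', hdisj⟩ := (Matroid.dual_indep_iff_exists').1 hCi
    have hB'E : B' ⊆ M.E := hB'.subset_ground
    have hBspan : ∀ e ∈ M.E, v e ∈ Submodule.span F (v '' B') := by
      intro e he
      by_contra hx
      have heB' : e ∉ B' := fun h => hx (Submodule.subset_span ⟨e, h, rfl⟩)
      have hliB' : LinearIndependent F (B'.restrict v) := (hv B' hB'E).1 hB'.indep
      have hinj : Set.InjOn v B' := Set.injOn_iff_injective.2 hliB'.injective
      have h1 : LinearIndependent F ((↑) : ↥(v '' B') → (Fin n → F)) :=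
        (linearIndepOn_iff_image hinj).1 hliB'
      have h2 := LinearIndepOn.insert (v := id) h1 (x := v e) (by simpa using hx)
      have hinj2 : Set.InjOn v (insert e B') := by
        intro a ha b hb hab
        rcases Set.mem_insert_iff.1 ha with rfl | ha' <;>
          rcases Set.mem_insert_iff.1 hb with rfl | hb'
        · rfl
        · exfalso; apply hx; rw [hab]; exact Submodule.subset_span ⟨b, hb', rfl⟩
        · exfalso; apply hx; rw [← hab]; exact Submodule.subset_span ⟨a, ha', rfl⟩
        · exact hinj ha' hb' hab
      have h3 : LinearIndependent F ((insert e B' : Set α).restrict v) := by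
        exact (linearIndepOn_iff_image hinj2).2 (by rw [Set.image_insert_eq]; exact h2)
      have hiins : M.Indep (insert e B') :=
        (hv _ (Set.insert_subset he hB'E)).2 h3
      exact (hB'.insert_dep ⟨he, heB'⟩).not_indep hiins
    have hwB' : w ∈ Submodule.span F (v '' B') := by
      have hle : W ≤ Submodule.span F (v '' B') := by
        rw [hWdef, Submodule.span_le]
        rintro x ⟨e, he, rfl⟩
        exact hBspan e he
      exact hle hwW
    have hker : v '' B' ⊆ (LinearMap.ker φ : Set (Fin n → F)) := by
      rintro x ⟨e, heB', rfl⟩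
      have heE : e ∈ M.E := hB'E heB'
      have heC : e ∉ C := fun hmem => (Set.disjoint_left.1 hdisj hmem) heB'
      have hz : φ (v e) = 0 := by
        by_contra hne0
        apply heC
        rw [hCdef, Finset.mem_coe, hCFdef, Finset.mem_filter]
        exact ⟨by rw [hEFdef]; exact hE.mem_toFinset.2 heE, hne0⟩
      simpa [LinearMap.mem_ker] using hz
    have hφw0 : φ w = 0 := by
      have hsub : Submodule.span F (v '' B') ≤ LinearMap.ker φ :=
        Submodule.span_le.2 hker
      simpa [LinearMap.mem_ker] using hsub hwB'
    exact zero_ne_one (hφw0.symm.trans hφ1)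
  -- extract a cocircuit inside C
  have hCfin : C.Finite := CF.finite_toSet
  have hmemN : C.ncard ∈ {m | ∃ D, D ⊆ C ∧ M✶.Dep D ∧ D.ncard = m} :=
    ⟨C, Set.Subset.rfl, hCdep, rfl⟩
  obtain ⟨D₀, hD₀C, hD₀dep, hD₀card⟩ :=
    Nat.sInf_mem (s := {m | ∃ D, D ⊆ C ∧ M✶.Dep D ∧ D.ncard = m}) ⟨_, hmemN⟩
  have hD₀fin : D₀.Finite := hCfin.subset hD₀C
  have hcoc : M.Cocircuit D₀ := by
    constructor
    · exact hD₀dep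
    · intro y hy hyD
      have hle : sInf {m | ∃ D, D ⊆ C ∧ M✶.Dep D ∧ D.ncard = m} ≤ y.ncard :=
        Nat.sInf_le ⟨y, Set.Subset.trans hyD hD₀C, hy, rfl⟩
      have heq : y = D₀ :=
        Set.eq_of_subset_of_ncard_le hyD (hD₀card.le.trans hle) hD₀fin
      exact heq.ge
  have hcog : M.cogirth ≤ D₀.ncard := Nat.sInf_le ⟨D₀, hcoc, rfl⟩
  have hDC : D₀.ncard ≤ C.ncard := Set.ncard_le_ncard hD₀C hCfin
  have hCcard : C.ncard = CF.card := Set.ncard_coe_finset _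
  have hEcard : M.E.ncard = EF.card := by
    rw [hEFdef, ← Set.ncard_coe_finset, hE.coe_toFinset]
  have hfinal : q * CF.card ≤ (q - 1) * EF.card := by
    have h1 : q * t + q * CF.card = q * EF.card := by rw [← Nat.mul_add, hCt]
    have h3 : (q - 1) * EF.card + EF.card = q * EF.card := by
      have hq1 : q - 1 + 1 = q := by omega
      calc (q - 1) * EF.card + EF.card = (q - 1 + 1) * EF.card := by ring
        _ = q * EF.card := by rw [hq1]
    have h4 : q * CF.card + EF.card ≤ q * CF.card + q * t := Nat.add_le_add_left hqt _
    linarith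
  calc q * M.cogirth ≤ q * C.ncard := Nat.mul_le_mul_left _ (le_trans hcog hDC)
    _ = q * CF.card := by rw [hCcard]
    _ ≤ (q - 1) * EF.card := hfinal
    _ = (q - 1) * M.E.ncard := by rw [hEcard]
end

section
/- Let q be a prime power, let r ≥ 1, and let M be a finite matroid whose simplification is the projective geometry PG(r−1,q) (that is, simp(M) is a simple rank-r matroid representable over GF(q) with exactly (q^r − 1)/(q − 1) elements). Then q^{r−1}·(q − 1)·|E(M)| ≥ (q^r − 1)·g*(M), i.e., |E(M)|/g*(M) ≥ (q^r − 1)/(q^{r−1}(q − 1)). -/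
open Set

private lemma nat_pow_sub (q r : ℕ) (hr : 1 ≤ r) :
    q ^ r - q ^ (r - 1) = q ^ (r - 1) * (q - 1) := by
  have h : q ^ r = q ^ (r - 1) * q := by
    rw [← pow_succ]; congr 1; omega
  rw [h, Nat.mul_sub, mul_one]

private lemma cogirth_le_ncard_of_dep {α : Type*} (M : Matroid α) [M.Finite] {X : Set α}
    (hX : M✶.Dep X) : M.cogirth ≤ X.ncard := by
  have hXE : X ⊆ M.E := by simpa using hX.subset_ground
  have hXfin : X.Finite := M.set_finite X hXE
  set T := {n | ∃ Y, Y ⊆ X ∧ M✶.Dep Y ∧ Y.ncard = n} with hT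
  have hmem : sInf T ∈ T := Nat.sInf_mem ⟨X.ncard, X, Set.Subset.rfl, hX, rfl⟩
  obtain ⟨Y, hYX, hYdep, hYc⟩ := hmem
  have hYfin := hXfin.subset hYX
  have hcc : M.Cocircuit Y := by
    refine ⟨hYdep, ?_⟩
    intro Z hZ hZY
    have hZT : Z.ncard ∈ T := ⟨Z, hZY.trans hYX, hZ, rfl⟩
    have hle : Y.ncard ≤ Z.ncard := hYc ▸ Nat.sInf_le hZT
    exact le_of_eq (Set.eq_of_subset_of_ncard_le hZY hle hYfin).symm
  calc M.cogirth ≤ Y.ncard := Nat.sInf_le ⟨Y, hcc, rfl⟩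
    _ ≤ X.ncard := Set.ncard_le_ncard hYX hXfin

open scoped Classical in
private lemma count_dual_ne_zero {F : Type*} [Field F] [Fintype F] {V : Type*} [AddCommGroup V]
    [Module F V] [FiniteDimensional F V] [Fintype (Module.Dual F V)]
    {x : V} (hx : x ≠ 0) :
    (Finset.univ.filter fun φ : Module.Dual F V => φ x ≠ 0).card
      = Fintype.card F ^ Module.finrank F V - Fintype.card F ^ (Module.finrank F V - 1) := by
  classical
  set n := Module.finrank F V with hn
  set L : Module.Dual F (Module.Dual F V) := Module.Dual.eval F V x with hL
  have hLne : L ≠ 0 := by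
    intro h0
    apply hx
    rw [← Module.forall_dual_apply_eq_zero_iff F x]
    intro φ
    have : L φ = 0 := by rw [h0]; rfl
    simpa [hL, Module.Dual.eval_apply] using this
  have hrange : LinearMap.range L = ⊤ := by
    rcases Ideal.eq_bot_or_top (LinearMap.range L) with h | h
    · exact absurd (LinearMap.range_eq_bot.1 h) hLne
    · exact h
  have hkerrank : Module.finrank F (LinearMap.ker L) = n - 1 := by
    have h1 := LinearMap.finrank_range_add_finrank_ker L
    rw [hrange, finrank_top, Module.finrank_self, Subspace.dual_finrank_eq] at h1
    omega
  haveI : Fintype (LinearMap.ker L) := Fintype.ofFinite _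
  have hkercard : Fintype.card (LinearMap.ker L) = Fintype.card F ^ (n - 1) := by
    rw [Module.card_eq_pow_finrank (K := F), hkerrank]
  have hducard : Fintype.card (Module.Dual F V) = Fintype.card F ^ n := by
    rw [Module.card_eq_pow_finrank (K := F), Subspace.dual_finrank_eq]
  have heq : (Finset.univ.filter fun φ : Module.Dual F V => φ x = 0).card
      = Fintype.card F ^ (n - 1) := by
    rw [← hkercard]
    exact (Fintype.card_of_subtype (Finset.univ.filter fun φ : Module.Dual F V => φ x = 0)
      (by intro φ; simp [LinearMap.mem_ker, hL, Module.Dual.eval_apply])).symm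
  have hadd := Finset.card_filter_add_card_filter_not
    (s := (Finset.univ : Finset (Module.Dual F V))) (p := fun φ => φ x = 0)
  rw [Finset.card_univ, hducard, heq] at hadd
  have hrw : (Finset.univ.filter fun φ : Module.Dual F V => φ x ≠ 0)
      = (Finset.univ.filter fun φ : Module.Dual F V => ¬ (φ x = 0)) := rfl
  rw [hrw]
  omega

/-- For a prime power `q` and `r ≥ 1`, if `M` is a finite matroid whose simplification is
the projective geometry `PG(r-1,q)` (i.e. `M` has rank `r`, is representable over `GF(q)`,
and its simplification has exactly `(q^r - 1)/(q - 1)` elements), then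
`|E(M)| / g*(M) ≥ (q^r - 1)/(q^{r-1}(q-1))`. -/
theorem cogirth_simp_pg {α : Type*} (M : Matroid α) [M.Finite]
    (q r : ℕ) (hr : 1 ≤ r) (hrank : ∃ B, M.IsBase B ∧ B.ncard = r)
    (F : Type*) [Field F] [Fintype F] (hF : Fintype.card F = q)
    (hrep : M.IsRepresentableOver F)
    (hsimp : (q - 1) * M.simpNcard = q ^ r - 1) :
    (q ^ r - 1) * M.cogirth ≤ q ^ (r - 1) * (q - 1) * M.E.ncard := by
  classical
  obtain ⟨B, hB, hBr⟩ := hrank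
  obtain ⟨n, v, hv⟩ := hrep
  have hq : 1 ≤ q := by rw [← hF]; exact Fintype.card_pos
  have hBE : B ⊆ M.E := hB.subset_ground
  have hEfin : M.E.Finite := M.ground_finite
  have hBfin : B.Finite := hEfin.subset hBE
  set W : Submodule F (Fin n → F) := Submodule.span F (v '' M.E) with hWdef
  have hbase : ∀ B₀, M.IsBase B₀ → Submodule.span F (v '' B₀) = W := by
    intro B₀ hB₀
    have hB₀E : B₀ ⊆ M.E := hB₀.subset_ground
    have hB₀li : LinearIndependent F (B₀.restrict v) := (hv B₀ hB₀E).1 hB₀.indep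
    refine le_antisymm (Submodule.span_mono (Set.image_mono hB₀E)) ?_
    rw [hWdef]
    refine Submodule.span_le.2 ?_
    rintro _ ⟨e, he, rfl⟩
    by_cases heB : e ∈ B₀
    · exact Submodule.subset_span (Set.mem_image_of_mem v heB)
    · have hdep : ¬ M.Indep (insert e B₀) := (hB₀.insert_dep ⟨he, heB⟩).not_indep
      have hnli : ¬ LinearIndependent F ((insert e B₀).restrict v) := fun h =>
        hdep ((hv _ (Set.insert_subset he hB₀E)).2 h)
      by_contra hnotmem
      exact hnli ((linearIndepOn_insert heB).2 ⟨hB₀li, hnotmem⟩)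
  have hmemW : ∀ e ∈ M.E, v e ∈ W := fun e he =>
    Submodule.subset_span (Set.mem_image_of_mem v he)
  set w : α → W := fun e => if h : v e ∈ W then (⟨v e, h⟩ : W) else 0 with hwdef
  have hw : ∀ e ∈ M.E, (w e : Fin n → F) = v e := by
    intro e he
    rw [hwdef]
    simp [hmemW e he]
  have hBli : LinearIndependent F (B.restrict v) := (hv B hBE).1 hB.indep
  have hinj : Set.InjOn v B := by
    intro x hx y hy hxy
    have h2 : (⟨x, hx⟩ : B) = ⟨y, hy⟩ := hBli.injective hxy
    exact congrArg Subtype.val h2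
  have himgfin : (v '' B).Finite := hBfin.image v
  haveI : Fintype ↥(v '' B) := himgfin.fintype
  have himg : LinearIndependent F ((↑) : (v '' B) → (Fin n → F)) := LinearIndepOn.id_image hBli
  have hfr : Module.finrank F W = r := by
    rw [← hbase B hB, finrank_span_set_eq_card himg, ← Set.ncard_eq_toFinset_card',
      Set.ncard_image_of_injOn hinj, hBr]
  haveI : Fintype W := Fintype.ofFinite W
  haveI : Finite (Module.Dual F W) :=
    Finite.of_injective (fun φ => (φ : W → F)) DFunLike.coe_injective
  haveI : Fintype (Module.Dual F W) := Fintype.ofFinite _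
  set EF : Finset α := hEfin.toFinset with hEF
  set D : Finset (Module.Dual F W) := Finset.univ.erase 0 with hD
  have hDcard : D.card = q ^ r - 1 := by
    rw [hD, Finset.card_erase_of_mem (Finset.mem_univ _), Finset.card_univ,
      Module.card_eq_pow_finrank (K := F), Subspace.dual_finrank_eq, hfr, hF]
  have hphi : ∀ φ ∈ D, M.cogirth ≤ (EF.filter fun e => φ (w e) ≠ 0).card := by
    intro φ hφ
    have hφne : φ ≠ 0 := (Finset.mem_erase.1 hφ).1
    set C : Set α := ↑(EF.filter fun e => φ (w e) ≠ 0) with hC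
    have hCE : C ⊆ M.E := by
      rw [hC]
      intro e he
      simp only [Finset.coe_filter, Set.mem_setOf_eq] at he
      exact (hEfin.mem_toFinset).1 he.1
    have hdep : M✶.Dep C := by
      rw [Matroid.dep_iff]
      refine ⟨?_, by simpa using hCE⟩
      intro hindep
      obtain ⟨_, B', hB', hdisj⟩ := Matroid.dual_indep_iff_exists'.1 hindep
      have hvan : ∀ e ∈ B', φ (w e) = 0 := by
        intro e he
        by_contra hne
        have heC : e ∈ C := by
          rw [hC]
          simp only [Finset.coe_filter, Set.mem_setOf_eq]
          exact ⟨(hEfin.mem_toFinset).2 (hB'.subset_ground he), hne⟩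
        exact (Set.disjoint_left.1 hdisj heC) he
      have hspan : Submodule.span F (w '' B') = (⊤ : Submodule F W) := by
        apply Submodule.map_injective_of_injective (Submodule.injective_subtype W)
        rw [Submodule.map_span, Submodule.map_subtype_top]
        have himeq : (W.subtype '' (w '' B')) = v '' B' := by
          rw [Set.image_image]
          exact Set.image_congr fun e he => hw e (hB'.subset_ground he)
        rw [himeq, hbase B' hB']
      exact hφne (LinearMap.ext_on hspan (by rintro _ ⟨e, he, rfl⟩; simpa using hvan e he))
    have hfin := cogirth_le_ncard_of_dep M hdep
    rwa [hC, Set.ncard_coe_finset] at hfin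
  have helem : ∀ e ∈ EF, (D.filter fun φ => φ (w e) ≠ 0).card ≤ q ^ (r - 1) * (q - 1) := by
    intro e _
    have hle : (D.filter fun φ => φ (w e) ≠ 0).card
        ≤ (Finset.univ.filter fun φ : Module.Dual F W => φ (w e) ≠ 0).card :=
      Finset.card_le_card (Finset.filter_subset_filter _ (Finset.subset_univ D))
    by_cases h0 : w e = 0
    · have hempty : (Finset.univ.filter fun φ : Module.Dual F W => φ (w e) ≠ 0) = ∅ := by
        apply Finset.filter_eq_empty_iff.2
        intro φ _
        simp [h0]
      rw [hempty] at hle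
      simpa using le_trans hle (Nat.zero_le _)
    · have hcount := count_dual_ne_zero (F := F) (x := w e) h0
      rw [hfr, hF] at hcount
      rw [hcount] at hle
      exact hle.trans (le_of_eq (nat_pow_sub q r hr))
  have hEcard : EF.card = M.E.ncard := by
    rw [hEF, Set.ncard_eq_toFinset_card M.E hEfin]
  calc (q ^ r - 1) * M.cogirth = ∑ _φ ∈ D, M.cogirth := by
        rw [Finset.sum_const, smul_eq_mul, hDcard]
    _ ≤ ∑ φ ∈ D, (EF.filter fun e => φ (w e) ≠ 0).card := Finset.sum_le_sum hphi
    _ = ∑ φ ∈ D, ∑ e ∈ EF, (if φ (w e) ≠ 0 then 1 else 0) := by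
        exact Finset.sum_congr rfl fun φ _ => Finset.card_filter _ _
    _ = ∑ e ∈ EF, ∑ φ ∈ D, (if φ (w e) ≠ 0 then 1 else 0) := Finset.sum_comm
    _ = ∑ e ∈ EF, (D.filter fun φ => φ (w e) ≠ 0).card := by
        exact Finset.sum_congr rfl fun e _ => (Finset.card_filter _ _).symm
    _ ≤ ∑ _e ∈ EF, q ^ (r - 1) * (q - 1) := Finset.sum_le_sum helem
    _ = q ^ (r - 1) * (q - 1) * M.E.ncard := by
        rw [Finset.sum_const, smul_eq_mul, hEcard, mul_comm]
end

section
/- Let q be a prime power, let r ≥ 1, let M be a finite simple matroid of rank r that is representable over GF(q) and is not isomorphic to the projective geometry PG(r−1,q) (equivalently, |E(M)| < (q^r − 1)/(q − 1)), and let w : E(M) → ℕ be a weight function with w(e) ≥ 1 for every e. Then (q − 1)·w(E(M)) ≥ q·g*_w(M). -/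
open Set

/-- The weighted cogirth of a matroid with weight function `w`: the minimum total
weight of a cocircuit. -/
noncomputable def Matroid.cogirthW {α : Type*} (M : Matroid α) (w : α → ℕ) : ℕ :=
  sInf {n | ∃ C, M.Cocircuit C ∧ n = ∑ᶠ x ∈ C, w x}

section auxlemmas

variable {F : Type*} [Field F] [Fintype F]

lemma aux_fiber_card {V W : Type*} [AddCommGroup V] [Module F V] [AddCommGroup W] [Module F W]
    [Finite V] [Finite W] (f : V →ₗ[F] W) (hf : Function.Surjective f) (y : W) :
    Nat.card (f ⁻¹' {y}) * Nat.card W = Nat.card V := by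
  classical
  haveI : Module.Finite F V := Module.Finite.of_finite
  obtain ⟨x₀, hx₀⟩ := hf y
  have hbij : (f ⁻¹' {y}) ≃ LinearMap.ker f :=
    { toFun := fun x => ⟨x.1 - x₀, by
        have hx := x.2
        simp only [Set.mem_preimage, Set.mem_singleton_iff] at hx
        simp [LinearMap.mem_ker, map_sub, hx, hx₀]⟩
      invFun := fun k => ⟨k.1 + x₀, by
        have hk := k.2
        rw [LinearMap.mem_ker] at hk
        simp [Set.mem_preimage, map_add, hk, hx₀]⟩
      left_inv := fun x => by simp
      right_inv := fun k => by simp }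
  haveI : Fintype V := Fintype.ofFinite V
  haveI : Fintype W := Fintype.ofFinite W
  haveI : Fintype (LinearMap.ker f) := Fintype.ofFinite _
  rw [Nat.card_congr hbij, Nat.card_eq_fintype_card, Nat.card_eq_fintype_card,
    Nat.card_eq_fintype_card,
    Module.card_eq_pow_finrank (K := F) (V := V), Module.card_eq_pow_finrank (K := F) (V := W),
    Module.card_eq_pow_finrank (K := F) (V := LinearMap.ker f), ← pow_add]
  congr 1
  have h := LinearMap.finrank_range_add_finrank_ker f
  rw [LinearMap.range_eq_top.mpr hf, finrank_top] at h
  omega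

lemma aux_surj_single {V : Type*} [AddCommGroup V] [Module F V] {u : V} (hu : u ≠ 0) :
    Function.Surjective fun φ : V →ₗ[F] F => φ u := by
  classical
  intro a
  have hs : LinearIndepOn F id ({u} : Set V) := (linearIndepOn_singleton_iff (R := F) (v := id)).mpr hu
  have hmem : u ∈ hs.extend (Set.subset_univ _) := hs.subset_extend _ rfl
  let b := Module.Basis.extend hs
  refine ⟨a • b.coord ⟨u, hmem⟩, ?_⟩
  have h1 : b.coord ⟨u, hmem⟩ (b ⟨u, hmem⟩) = 1 := by
    rw [Module.Basis.coord_apply, Module.Basis.repr_self, Finsupp.single_apply]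
    simp
  rw [Module.Basis.extend_apply_self] at h1
  have h1' : (b.repr u) ⟨u, hmem⟩ = 1 := by simpa using h1
  simp [Module.Basis.coord_apply, h1']

lemma aux_surj_pair {V : Type*} [AddCommGroup V] [Module F V] {u₁ u₂ : V}
    (h : LinearIndepOn F id ({u₁, u₂} : Set V)) (hne : u₁ ≠ u₂) :
    Function.Surjective fun φ : V →ₗ[F] F => (φ u₁, φ u₂) := by
  classical
  rintro ⟨a, c⟩
  have h1m : u₁ ∈ h.extend (Set.subset_univ _) := h.subset_extend _ (by left; rfl)
  have h2m : u₂ ∈ h.extend (Set.subset_univ _) := h.subset_extend _ (by right; rfl)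
  let b := Module.Basis.extend h
  have hb : ∀ (x : V) (hx : x ∈ h.extend (Set.subset_univ _)), b ⟨x, hx⟩ = x :=
    fun x hx => Module.Basis.extend_apply_self h ⟨x, hx⟩
  have key : ∀ (i j : h.extend (Set.subset_univ _)),
      b.coord i (j : V) = if (j : V) = (i : V) then 1 else 0 := by
    intro i j
    conv_lhs => rw [show (j : V) = b j from (hb j.1 j.2).symm]
    rw [Module.Basis.coord_apply, Module.Basis.repr_self, Finsupp.single_apply]
    simp [Subtype.ext_iff]
  refine ⟨a • b.coord ⟨u₁, h1m⟩ + c • b.coord ⟨u₂, h2m⟩, ?_⟩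
  have k11 := key ⟨u₁, h1m⟩ ⟨u₁, h1m⟩
  have k12 := key ⟨u₁, h1m⟩ ⟨u₂, h2m⟩
  have k21 := key ⟨u₂, h2m⟩ ⟨u₁, h1m⟩
  have k22 := key ⟨u₂, h2m⟩ ⟨u₂, h2m⟩
  simp only [if_pos rfl, if_neg hne, if_neg (Ne.symm hne)] at k11 k12 k21 k22
  simp [k11, k12, k21, k22]

end auxlemmas

/-- Let `q` be a prime power, `r ≥ 1`, and `M` a finite simple rank-`r` matroid
representable over `GF(q)` that is not isomorphic to `PG(r-1,q)` (i.e.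
`|E(M)| < (q^r - 1)/(q - 1)`), with a positive integer weight function `w`. Then
`(q-1)·w(E(M)) ≥ q·g*_w(M)`. -/
theorem weighted_cogirth_not_pg {α : Type*} (M : Matroid α) [M.Finite]
    (hsimple : ∀ e ∈ M.E, ∀ f ∈ M.E, M.Indep {e, f})
    (q r : ℕ) (hr : 1 ≤ r) (hrank : ∃ B, M.IsBase B ∧ B.ncard = r)
    (F : Type*) [Field F] [Fintype F] (hF : Fintype.card F = q)
    (hrep : M.IsRepresentableOver F)
    (hnotpg : (q - 1) * M.E.ncard < q ^ r - 1)
    (w : α → ℕ) (hw : ∀ e ∈ M.E, 1 ≤ w e) :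
    q * M.cogirthW w ≤ (q - 1) * ∑ᶠ e ∈ M.E, w e := by
  classical
  obtain ⟨n, v, hv⟩ := hrep
  have hE : M.E.Finite := M.ground_finite
  have hq2 : 2 ≤ q := hF ▸ Fintype.one_lt_card
  obtain ⟨B, hB, hBr⟩ := hrank
  have hBE : B ⊆ M.E := hB.subset_ground
  have hBli : LinearIndependent F (B.restrict v) := (hv B hBE).mp hB.indep
  -- every element is represented by a nonzero vector
  have hvne : ∀ e ∈ M.E, v e ≠ 0 := by
    intro e he
    have hei : M.Indep {e} := by
      have := hsimple e he e he
      simpa [Set.pair_eq_singleton] using this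
    have hli : LinearIndependent F (({e} : Set α).restrict v) :=
      (hv {e} (Set.singleton_subset_iff.mpr he)).mp hei
    exact hli.ne_zero ⟨e, rfl⟩
  -- spanning sets of the matroid have spanning images
  have key : ∀ X, M.Spanning X →
      Submodule.span F (v '' M.E) ≤ Submodule.span F (v '' X) := by
    intro X hX
    obtain ⟨B', hB', hB'X⟩ := hX.exists_isBase_subset
    refine le_trans ?_ (Submodule.span_mono (Set.image_mono hB'X))
    rw [Submodule.span_le]
    rintro _ ⟨e, he, rfl⟩
    rw [SetLike.mem_coe]
    by_cases heB' : e ∈ B'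
    · exact Submodule.subset_span ⟨e, heB', rfl⟩
    · have hdep : M.Dep (insert e B') := hB'.insert_dep ⟨he, heB'⟩
      have hsub : insert e B' ⊆ M.E := Set.insert_subset he hB'.subset_ground
      have hnind : ¬ LinearIndependent F ((insert e B').restrict v) := by
        rw [← hv _ hsub]; exact hdep.not_indep
      have hB'li : LinearIndependent F (B'.restrict v) :=
        (hv B' hB'.subset_ground).mp hB'.indep
      by_contra hspan
      exact hnind ((linearIndepOn_insert heB').mpr ⟨hB'li, hspan⟩)
  -- the span of the whole ground set
  set U : Submodule F (Fin n → F) := Submodule.span F (v '' M.E) with hU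
  have hUB : U = Submodule.span F (v '' B) :=
    le_antisymm (key B hB.spanning) (Submodule.span_mono (Set.image_mono hBE))
  have hinjB : Set.InjOn v B := by
    rw [Set.injOn_iff_injective]; exact hBli.injective
  have hliB : LinearIndependent F ((↑) : (v '' B) → (Fin n → F)) :=
    (linearIndepOn_iff_image hinjB).mp hBli
  haveI : Fintype ↥(v '' B) := Fintype.ofFinite _
  have hrU : Module.finrank F U = r := by
    rw [hUB, finrank_span_set_eq_card hliB, ← Set.ncard_eq_toFinset_card',
      Set.ncard_image_of_injOn hinjB, hBr]
  haveI : Fintype ↥U := Fintype.ofFinite _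
  have hcardU : Nat.card ↥U = q ^ r := by
    rw [Nat.card_eq_fintype_card, Module.card_eq_pow_finrank (K := F) (V := ↥U), hF, hrU]
  have hBne : B.Nonempty := by
    rw [← Set.ncard_pos (hE.subset hBE)]; omega
  -- a projective point of U missed by all elements
  have hpex : ∃ p, p ∈ U ∧ ∀ e ∈ M.E, p ∉ Submodule.span F {v e} := by
    by_contra hcon
    push_neg at hcon
    have h1 : ((U : Set (Fin n → F)) \ {0}).toFinset ⊆
        hE.toFinset.biUnion (fun e =>
          ((Submodule.span F {v e} : Set (Fin n → F)) \ {0}).toFinset) := by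
      intro x hx
      rw [Set.mem_toFinset] at hx
      obtain ⟨hxU, hx0⟩ := hx
      obtain ⟨e, he, hxe⟩ := hcon x hxU
      exact Finset.mem_biUnion.mpr ⟨e, hE.mem_toFinset.mpr he,
        Set.mem_toFinset.mpr ⟨hxe, hx0⟩⟩
    have h2 := (Finset.card_le_card h1).trans (Finset.card_biUnion_le)
    have hAU : ((U : Set (Fin n → F)) \ {0}).toFinset.card = q ^ r - 1 := by
      rw [← Set.ncard_eq_toFinset_card',
        Set.ncard_diff_singleton_of_mem (Submodule.zero_mem U)]
      have hUc : ((U : Set (Fin n → F))).ncard = q ^ r := by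
        rw [← Nat.card_coe_set_eq]; exact hcardU
      omega
    have hAe : ∀ e ∈ M.E,
        ((Submodule.span F {v e} : Set (Fin n → F)) \ {0}).toFinset.card = q - 1 := by
      intro e he
      rw [← Set.ncard_eq_toFinset_card',
        Set.ncard_diff_singleton_of_mem (Submodule.zero_mem _)]
      haveI : Fintype ↥(Submodule.span F {v e}) := Fintype.ofFinite _
      have hsc : ((Submodule.span F {v e} : Submodule F (Fin n → F)) : Set (Fin n → F)).ncard
          = q := by
        rw [← Nat.card_coe_set_eq,
          show Nat.card ↥((Submodule.span F {v e} : Submodule F (Fin n → F)) : Set (Fin n → F))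
            = Nat.card ↥(Submodule.span F {v e}) from rfl,
          Nat.card_eq_fintype_card, Module.card_eq_pow_finrank (K := F), hF,
          finrank_span_singleton (hvne e he), pow_one]
      omega
    have h3 : ∑ e ∈ hE.toFinset,
        ((Submodule.span F {v e} : Set (Fin n → F)) \ {0}).toFinset.card
        = M.E.ncard * (q - 1) := by
      rw [Finset.sum_congr rfl (fun e he => hAe e (hE.mem_toFinset.mp he)),
        Finset.sum_const, smul_eq_mul, Set.ncard_eq_toFinset_card _ hE]
    rw [hAU, h3] at h2
    rw [mul_comm] at hnotpg
    omega
  obtain ⟨p, hpU, hp⟩ := hpex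
  have hpne : p ≠ 0 := by
    obtain ⟨e₀, he₀⟩ := hBne
    intro h0
    exact hp e₀ (hBE he₀) (h0 ▸ Submodule.zero_mem _)
  -- the dual space is finite
  haveI : Finite ((Fin n → F) →ₗ[F] F) :=
    Finite.of_injective _ (DFunLike.coe_injective (F := (Fin n → F) →ₗ[F] F))
  haveI : Fintype ((Fin n → F) →ₗ[F] F) := Fintype.ofFinite _
  have hDcard : Nat.card ((Fin n → F) →ₗ[F] F) = q ^ n := by
    rw [Nat.card_eq_fintype_card, Module.card_eq_pow_finrank (K := F), hF]
    congr 1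
    have h := Subspace.dual_finrank_eq (K := F) (V := Fin n → F)
    rw [show Module.finrank F ((Fin n → F) →ₗ[F] F)
        = Module.finrank F (Module.Dual F (Fin n → F)) from rfl, h, Module.finrank_fin_fun]
  -- the evaluation functional at p and its fiber
  set Lp : ((Fin n → F) →ₗ[F] F) →ₗ[F] F :=
    ⟨⟨fun φ => φ p, fun _ _ => rfl⟩, fun _ _ => rfl⟩ with hLp
  have hLpsurj : Function.Surjective Lp := aux_surj_single hpne
  set SF : Finset ((Fin n → F) →ₗ[F] F) := Set.toFinset (⇑Lp ⁻¹' {1}) with hSF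
  have hSFcard : SF.card * q = q ^ n := by
    have h := aux_fiber_card Lp hLpsurj 1
    rw [Nat.card_eq_fintype_card (α := F), hF, hDcard] at h
    rw [hSF, ← Set.ncard_eq_toFinset_card', ← Nat.card_coe_set_eq]
    exact h
  have hSmem : ∀ φ, φ ∈ SF ↔ φ p = 1 := by
    intro φ
    rw [hSF, Set.mem_toFinset, Set.mem_preimage, Set.mem_singleton_iff]
    exact Iff.rfl
  -- pair independence and fiber counts
  have hpairli : ∀ e ∈ M.E,
      LinearIndependent F ((↑) : ({p, v e} : Set (Fin n → F)) → (Fin n → F)) := by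
    intro e he
    have h0 : v e ≠ 0 := hvne e he
    have h1 : p ∉ ({v e} : Set (Fin n → F)) := by
      intro hmem
      rw [Set.mem_singleton_iff] at hmem
      exact hp e he (hmem ▸ Submodule.subset_span rfl)
    exact (linearIndepOn_id_insert h1).mpr ⟨(linearIndepOn_singleton_iff (R := F) (v := id)).mpr h0, hp e he⟩
  have hfiber_e : ∀ e ∈ M.E,
      (SF.filter (fun φ => φ (v e) = 0)).card * (q * q) = q ^ n := by
    intro e he
    have hpvne : p ≠ v e := fun h => hp e he (h ▸ Submodule.subset_span rfl)
    set L : ((Fin n → F) →ₗ[F] F) →ₗ[F] F × F :=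
      ⟨⟨fun φ => (φ p, φ (v e)), fun _ _ => rfl⟩, fun _ _ => rfl⟩ with hL
    have hsurj : Function.Surjective L := aux_surj_pair (hpairli e he) hpvne
    have h := aux_fiber_card L hsurj ((1 : F), (0 : F))
    rw [Nat.card_prod, Nat.card_eq_fintype_card (α := F), hF, hDcard] at h
    have hset : SF.filter (fun φ => φ (v e) = 0) = Set.toFinset (⇑L ⁻¹' {((1:F),(0:F))}) := by
      ext ψ
      simp only [Finset.mem_filter, hSmem, Set.mem_toFinset, Set.mem_preimage,
        Set.mem_singleton_iff, Prod.ext_iff]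
      exact Iff.rfl
    rw [hset, ← Set.ncard_eq_toFinset_card', ← Nat.card_coe_set_eq]
    exact h
  -- the double counting
  set EF : Finset α := hE.toFinset with hEF
  set W' : ℕ := ∑ e ∈ EF, w e with hW'
  set T : ((Fin n → F) →ₗ[F] F) → ℕ :=
    fun φ => ∑ e ∈ EF, if φ (v e) = 0 then w e else 0 with hT
  have hdouble : ∑ φ ∈ SF, T φ
      = ∑ e ∈ EF, w e * (SF.filter (fun φ => φ (v e) = 0)).card := by
    rw [hT]
    rw [Finset.sum_comm]
    refine Finset.sum_congr rfl fun e he => ?_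
    rw [← Finset.sum_filter, Finset.sum_const, smul_eq_mul, mul_comm]
  have hW1 : 1 ≤ W' := by
    obtain ⟨e₀, he₀⟩ := hBne
    have he₀E := hBE he₀
    calc 1 ≤ w e₀ := hw e₀ he₀E
    _ ≤ W' := Finset.single_le_sum (fun i _ => Nat.zero_le _) (hE.mem_toFinset.mpr he₀E)
  have hqn : 0 < q ^ n := pow_pos (by omega) n
  have hex : ∃ φ ∈ SF, W' ≤ q * T φ := by
    by_contra hcon
    push_neg at hcon
    have h1 : ∑ φ ∈ SF, (q * T φ) ≤ SF.card * (W' - 1) := by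
      have := Finset.sum_le_card_nsmul SF (fun φ => q * T φ) (W' - 1)
        (fun φ hφ => by have := hcon φ hφ; show q * T φ ≤ W' - 1; omega)
      simpa [smul_eq_mul] using this
    have h2 : q * ∑ φ ∈ SF, T φ ≤ SF.card * (W' - 1) := by
      rw [Finset.mul_sum]; exact h1
    have h3 : (∑ φ ∈ SF, T φ) * (q * q) = W' * q ^ n := by
      rw [hdouble, Finset.sum_mul]
      calc ∑ e ∈ EF, w e * (SF.filter (fun φ => φ (v e) = 0)).card * (q * q)
          = ∑ e ∈ EF, w e * q ^ n := Finset.sum_congr rfl fun e he => by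
            rw [mul_assoc, hfiber_e e (hE.mem_toFinset.mp he)]
      _ = W' * q ^ n := by rw [← Finset.sum_mul]
    have h4 : W' * q ^ n ≤ q ^ n * (W' - 1) := by
      calc W' * q ^ n = (∑ φ ∈ SF, T φ) * (q * q) := h3.symm
      _ = (q * ∑ φ ∈ SF, T φ) * q := by ring
      _ ≤ (SF.card * (W' - 1)) * q := Nat.mul_le_mul_right _ h2
      _ = (SF.card * q) * (W' - 1) := by ring
      _ = q ^ n * (W' - 1) := by rw [hSFcard]
    have h5 : q ^ n * (W' - 1) < q ^ n * W' :=
      mul_lt_mul_of_pos_left (by omega) hqn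
    rw [mul_comm] at h4
    omega
  obtain ⟨φ, hφS, hφT⟩ := hex
  have hφp : φ p = 1 := (hSmem φ).mp hφS
  set KF : Finset α := EF.filter (fun e => φ (v e) = 0) with hKF
  set CF : Finset α := EF.filter (fun e => ¬ (φ (v e) = 0)) with hCF
  have hTK : T φ = ∑ e ∈ KF, w e := by rw [hT, hKF, Finset.sum_filter]
  have hsplit : ∑ e ∈ KF, w e + ∑ e ∈ CF, w e = W' := by
    rw [hKF, hCF, hW']
    exact Finset.sum_filter_add_sum_filter_not EF _ _
  set C : Set α := ↑CF with hC
  have hCE : C ⊆ M.E := by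
    intro x hx
    rw [hC, Finset.mem_coe, hCF, Finset.mem_filter] at hx
    exact hE.mem_toFinset.mp hx.1
  have hCdep : M✶.Dep C := by
    rw [Matroid.dep_iff]
    refine ⟨?_, by rwa [Matroid.dual_ground]⟩
    intro hCind
    have hsp : M.Spanning (M.E \ C) := (M.coindep_iff_compl_spanning hCE).mp hCind
    have hpK : p ∈ Submodule.span F (v '' (M.E \ C)) := key _ hsp hpU
    have hker : Submodule.span F (v '' (M.E \ C)) ≤ LinearMap.ker φ := by
      rw [Submodule.span_le]
      rintro _ ⟨e, ⟨heE, heC⟩, rfl⟩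
      rw [SetLike.mem_coe, LinearMap.mem_ker]
      by_contra hne0
      exact heC (by
        rw [hC, Finset.mem_coe, hCF, Finset.mem_filter]
        exact ⟨hE.mem_toFinset.mpr heE, hne0⟩)
    have hzero := hker hpK
    rw [LinearMap.mem_ker, hφp] at hzero
    exact one_ne_zero hzero
  -- extract a cocircuit inside C
  have hCfin : C.Finite := CF.finite_toSet
  obtain ⟨C', hC'mem, hmin⟩ := Set.Finite.exists_minimal (s := {X | X ⊆ C ∧ M✶.Dep X})
    (hCfin.finite_subsets.subset (fun X hX => hX.1)) ⟨C, subset_rfl, hCdep⟩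
  have hcocirc : M.Cocircuit C' := by
    constructor
    · exact hC'mem.2
    · intro Y hY hYle
      exact hmin ⟨le_trans hYle hC'mem.1, hY⟩ hYle
  have hcog : M.cogirthW w ≤ ∑ᶠ x ∈ C', w x := Nat.sInf_le ⟨C', hcocirc, rfl⟩
  have hC'fin : C'.Finite := hCfin.subset hC'mem.1
  have hfin_eq : ∑ᶠ x ∈ C', w x = ∑ x ∈ hC'fin.toFinset, w x := by
    conv_lhs => rw [← hC'fin.coe_toFinset]
    exact finsum_mem_coe_finset _ _
  have hle2 : ∑ x ∈ hC'fin.toFinset, w x ≤ ∑ e ∈ CF, w e := by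
    refine Finset.sum_le_sum_of_subset ?_
    intro x hx
    have hxC : x ∈ C := hC'mem.1 (hC'fin.mem_toFinset.mp hx)
    rwa [hC, Finset.mem_coe] at hxC
  have hcog2 : M.cogirthW w ≤ ∑ e ∈ CF, w e := by
    rw [hfin_eq] at hcog
    exact hcog.trans hle2
  have hEval : ∑ᶠ e ∈ M.E, w e = W' := by
    rw [hW', hEF]
    conv_lhs => rw [← hE.coe_toFinset]
    exact finsum_mem_coe_finset _ _
  rw [hEval]
  have hq1 : W' ≤ q * (∑ e ∈ KF, w e) := by rw [← hTK]; exact hφT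
  have hsub1 : (q - 1) * W' = q * W' - W' := Nat.sub_one_mul q W'
  have hmul : q * (∑ e ∈ KF, w e) + q * (∑ e ∈ CF, w e) = q * W' := by
    rw [← Nat.mul_add, hsplit]
  have hstep : q * M.cogirthW w ≤ q * (∑ e ∈ CF, w e) := Nat.mul_le_mul_left _ hcog2
  omega
end

section
/- Let F be a finite field with |F| = q, let V be an F-vector space of finite dimension r, and let W ≤ V be a subspace with 1 ≤ k := dim W < r. Let S = ℙ(V) ∖ pts(W), and let w : S → ℕ with w(p) ≥ 1 for all p be such that for every subspace U with W ≤ U ≤ V and dim U = k + 1, the function w is constant on S ∩ pts(U). Then for every linear hyperplane H of V that does not contain W, one has q·w(S ∖ pts(H)) = (q − 1)·w(S). -/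
open Set Module

/-- The set of projective points lying in a subspace `U` of `V`. -/
def projPts {F V : Type*} [DivisionRing F] [AddCommGroup V] [Module F V]
    (U : Submodule F V) : Set (Projectivization F V) :=
  {p | p.submodule ≤ U}

/-- The weight of a set of projective points. -/
noncomputable def projWeight {F V : Type*} [DivisionRing F] [AddCommGroup V] [Module F V]
    (X : Set (Projectivization F V)) (w : Projectivization F V → ℕ) : ℕ :=
  ∑ᶠ p ∈ X, w p

/-- The weighted cogirth of a set `S` of projective points: the minimum, over all linear
hyperplanes `H` of `V`, of the weight of `S \ pts(H)`. -/
noncomputable def projCogirthW {F V : Type*} [DivisionRing F] [AddCommGroup V] [Module F V]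
    (S : Set (Projectivization F V)) (w : Projectivization F V → ℕ) : ℕ :=
  sInf {n | ∃ H : Submodule F V, finrank F H = finrank F V - 1 ∧ n = projWeight (S \ projPts H) w}

section Helpers

variable {F V : Type*} [Field F] [Fintype F] [AddCommGroup V] [Module F V]
    [FiniteDimensional F V]

private lemma submodule_coe_ncard (C : Submodule F V) :
    (C : Set V).ncard = Fintype.card F ^ finrank F C := by
  classical
  haveI : Finite V := Module.finite_of_finite F
  haveI : Fintype V := Fintype.ofFinite V
  haveI : Fintype C := Fintype.ofFinite C
  rw [← Nat.card_coe_set_eq]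
  have h1 : Nat.card (C : Set V) = Nat.card C := rfl
  rw [h1, Nat.card_eq_fintype_card]
  exact Module.card_eq_pow_finrank (K := F) (V := C)

private lemma proj_count (A B : Submodule F V) :
    {p : Projectivization F V | p.submodule ≤ A ∧ ¬ p.submodule ≤ B}.ncard
        * (Fintype.card F - 1) + Fintype.card F ^ finrank F ↥(A ⊓ B)
      = Fintype.card F ^ finrank F A := by
  classical
  haveI : Finite V := Module.finite_of_finite F
  haveI : Fintype V := Fintype.ofFinite V
  haveI : Finite (Projectivization F V) := Quotient.finite _
  by_cases hAB : A ≤ B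
  · have h1 : {p : Projectivization F V | p.submodule ≤ A ∧ ¬ p.submodule ≤ B} = ∅ := by
      ext p
      simp only [Set.mem_setOf_eq, Set.mem_empty_iff_false, iff_false, not_and, not_not]
      exact fun h => h.trans hAB
    rw [h1, Set.ncard_empty, zero_mul, zero_add, inf_eq_left.mpr hAB]
  · obtain ⟨v₀, hv₀A, hv₀B⟩ := SetLike.not_le_iff_exists.mp hAB
    have hv₀ : v₀ ≠ 0 := fun h => hv₀B (h ▸ B.zero_mem)
    set p₀ := Projectivization.mk F v₀ hv₀ with hp₀
    set f : V → Projectivization F V :=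
      fun v => if h : v = 0 then p₀ else Projectivization.mk F v h with hf
    set VS : Set V := (A : Set V) \ (B : Set V) with hVS
    set PS : Set (Projectivization F V) :=
      {p | p.submodule ≤ A ∧ ¬ p.submodule ≤ B} with hPS
    have hmaps : ∀ v ∈ VS.toFinite.toFinset, f v ∈ PS.toFinite.toFinset := by
      intro v hv
      rw [Set.Finite.mem_toFinset] at hv ⊢
      obtain ⟨hvA, hvB⟩ := hv
      have hv0 : v ≠ 0 := fun h => hvB (by simp [h])
      simp only [hf, dif_neg hv0, hPS, Set.mem_setOf_eq, Projectivization.submodule_mk]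
      exact ⟨(Submodule.span_singleton_le_iff_mem v A).mpr hvA,
        fun h => hvB (h (Submodule.mem_span_singleton_self v))⟩
    have hcard := Finset.card_eq_sum_card_fiberwise hmaps
    have hfib : ∀ p ∈ PS.toFinite.toFinset,
        (VS.toFinite.toFinset.filter fun v => f v = p).card = Fintype.card F - 1 := by
      intro p hp
      rw [Set.Finite.mem_toFinset] at hp
      obtain ⟨hpA, hpB⟩ := hp
      have hrepmem : p.rep ∈ p.submodule := by
        rw [Projectivization.submodule_eq]
        exact Submodule.mem_span_singleton_self _
      have hrepA : p.rep ∈ A := hpA hrepmem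
      have hbij : (Finset.univ : Finset Fˣ).card
          = (VS.toFinite.toFinset.filter fun v => f v = p).card := by
        apply Finset.card_nbij (fun a : Fˣ => (a : F) • p.rep)
        · intro a _
          have hne : (a : F) • p.rep ≠ 0 :=
            smul_ne_zero (Units.ne_zero a) p.rep_nonzero
          rw [Finset.mem_coe, Finset.mem_filter, Set.Finite.mem_toFinset]
          refine ⟨⟨A.smul_mem _ hrepA, fun hb => hpB ?_⟩, ?_⟩
          · have hmem : ((a⁻¹ : Fˣ) : F) • ((a : F) • p.rep) ∈ B := B.smul_mem _ hb
            rw [smul_smul, Units.inv_mul, one_smul] at hmem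
            rw [Projectivization.submodule_eq]
            exact (Submodule.span_singleton_le_iff_mem _ _).mpr hmem
          · show f ((a : F) • p.rep) = p
            rw [hf]
            simp only [dif_neg hne]
            conv_rhs => rw [← Projectivization.mk_rep p]
            exact (Projectivization.mk_eq_mk_iff F _ _ hne p.rep_nonzero).mpr
              ⟨a, (Units.smul_def a p.rep).symm ▸ rfl⟩
        · intro a _ b _ h
          exact Units.ext (smul_left_injective F p.rep_nonzero h)
        · intro u hu
          rw [Finset.coe_filter, Set.mem_setOf_eq, Set.Finite.mem_toFinset] at hu
          obtain ⟨⟨huA, huB⟩, hfu⟩ := hu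
          have hu0 : u ≠ 0 := fun h => huB (by simp [h])
          rw [hf] at hfu
          simp only [dif_neg hu0] at hfu
          rw [← Projectivization.mk_rep p] at hfu
          obtain ⟨a, ha⟩ := (Projectivization.mk_eq_mk_iff F _ _ hu0 p.rep_nonzero).mp hfu
          rw [Units.smul_def] at ha
          exact ⟨a, Finset.mem_coe.mpr (Finset.mem_univ a), ha⟩
      rw [← hbij, Finset.card_univ, Fintype.card_units]
    have h2 : VS.toFinite.toFinset.card
        = PS.toFinite.toFinset.card * (Fintype.card F - 1) := by
      rw [hcard]
      calc ∑ p ∈ PS.toFinite.toFinset,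
            (VS.toFinite.toFinset.filter fun v => f v = p).card
          = ∑ _p ∈ PS.toFinite.toFinset, (Fintype.card F - 1) :=
            Finset.sum_congr rfl hfib
        _ = PS.toFinite.toFinset.card * (Fintype.card F - 1) := by
            rw [Finset.sum_const, smul_eq_mul]
    have h3 : VS.ncard + ((A ⊓ B : Submodule F V) : Set V).ncard = (A : Set V).ncard := by
      have hsub : ((A ⊓ B : Submodule F V) : Set V) ⊆ (A : Set V) := fun v hv => hv.1
      have hdiffeq : VS = (A : Set V) \ ((A ⊓ B : Submodule F V) : Set V) := by
        ext v
        simp only [hVS, Set.mem_diff, SetLike.mem_coe, Submodule.mem_inf]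
        tauto
      rw [hdiffeq]
      exact Set.ncard_diff_add_ncard_of_subset hsub
    have h4 : VS.ncard = PS.ncard * (Fintype.card F - 1) := by
      rw [Set.ncard_eq_toFinset_card VS VS.toFinite,
        Set.ncard_eq_toFinset_card PS PS.toFinite]
      exact h2
    rw [← submodule_coe_ncard, ← submodule_coe_ncard, ← h3, h4]

end Helpers

/-- Type-II cocircuits of a Bose–Burton geometry: if `S = ℙ(V) \ pts(W)` with
`1 ≤ k = dim W < r` and `w` is a positive weight function on `S` that is constant on
`S ∩ pts(U)` for every subspace `U` with `W ≤ U` and `dim U = k + 1`, then for every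
linear hyperplane `H` not containing `W`, `q·w(S \ pts(H)) = (q-1)·w(S)`. -/
theorem bose_burton_type_two_cocircuit_weight {F V : Type*} [Field F] [Fintype F]
    [AddCommGroup V] [Module F V] [FiniteDimensional F V]
    (q r k : ℕ) (hq : Fintype.card F = q) (hr : finrank F V = r)
    (W : Submodule F V) (hk : finrank F W = k) (hk1 : 1 ≤ k) (hkr : k < r)
    (S : Set (Projectivization F V)) (hS : S = Set.univ \ projPts W)
    (w : Projectivization F V → ℕ) (hw : ∀ p ∈ S, 1 ≤ w p)
    (hconst : ∀ U : Submodule F V, W ≤ U → finrank F U = k + 1 →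
      ∀ p ∈ S ∩ projPts U, ∀ p' ∈ S ∩ projPts U, w p = w p') :
    ∀ H : Submodule F V, finrank F H = r - 1 → ¬ W ≤ H →
      q * projWeight (S \ projPts H) w = (q - 1) * projWeight S w := by
  intro H hH hWH
  classical
  haveI : Finite V := Module.finite_of_finite F
  haveI : Finite (Projectivization F V) := Quotient.finite _
  obtain ⟨m, hm⟩ : ∃ m, q = m + 1 := ⟨q - 1, by
    have h := Fintype.one_lt_card (α := F); omega⟩
  have hm1 : 1 ≤ m := by
    have h := Fintype.one_lt_card (α := F); omega
  -- sup with H is everything, for subspaces not contained in H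
  have hsupH : ∀ U : Submodule F V, ¬ U ≤ H → U ⊔ H = ⊤ := by
    intro U hU
    have hlt : H < U ⊔ H :=
      lt_of_le_of_ne le_sup_right (fun h => hU (le_sup_left.trans_eq h.symm))
    apply Submodule.eq_top_of_finrank_eq
    have h1 : finrank F H < finrank F ↥(U ⊔ H) := Submodule.finrank_lt_finrank_of_lt hlt
    have h2 : finrank F ↥(U ⊔ H) ≤ finrank F V := Submodule.finrank_le _
    omega
  have hinfH : ∀ U : Submodule F V, ¬ U ≤ H →
      finrank F ↥(U ⊓ H) + 1 = finrank F U := by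
    intro U hU
    have h1 := Submodule.finrank_sup_add_finrank_inf_eq U H
    rw [hsupH U hU, finrank_top] at h1
    have h2 : finrank F U ≤ finrank F V := Submodule.finrank_le _
    omega
  -- rank of W ⊔ p.submodule for p ∈ S
  have hφ : ∀ p : Projectivization F V, p ∈ S →
      finrank F ↥(W ⊔ p.submodule) = k + 1 := by
    intro p hp
    rw [hS] at hp
    have hpW : ¬ p.submodule ≤ W := hp.2
    have hinf : W ⊓ p.submodule = ⊥ := by
      by_contra hne
      have hle : W ⊓ p.submodule ≤ p.submodule := inf_le_right
      have h1 : finrank F ↥(W ⊓ p.submodule) ≤ 1 := by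
        have := Submodule.finrank_mono hle
        rwa [p.finrank_submodule] at this
      have h2 : finrank F ↥(W ⊓ p.submodule) ≠ 0 :=
        fun h => hne (Submodule.finrank_eq_zero.mp h)
      have h3 : finrank F ↥(W ⊓ p.submodule) = 1 := by omega
      have h4 : W ⊓ p.submodule = p.submodule :=
        Submodule.eq_of_le_of_finrank_eq hle (by rw [h3, p.finrank_submodule])
      exact hpW (h4 ▸ inf_le_left)
    have h5 := Submodule.finrank_sup_add_finrank_inf_eq W p.submodule
    rw [hinf, finrank_bot, p.finrank_submodule, hk] at h5
    omega
  have hsfin := S.toFinite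
  have hsdfin := (S \ projPts H).toFinite
  simp only [projWeight]
  rw [finsum_mem_eq_finite_toFinset_sum _ hsdfin, finsum_mem_eq_finite_toFinset_sum _ hsfin]
  set φ : Projectivization F V → Submodule F V := fun p => W ⊔ p.submodule with hφdef
  set t : Finset (Submodule F V) := hsfin.toFinset.image φ with htdef
  have hmaps1 : ∀ p ∈ hsfin.toFinset, φ p ∈ t :=
    fun p hp => Finset.mem_image_of_mem φ hp
  have hmaps2 : ∀ p ∈ hsdfin.toFinset, φ p ∈ t := by
    intro p hp
    apply Finset.mem_image_of_mem
    rw [Set.Finite.mem_toFinset] at hp ⊢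
    exact hp.1
  rw [← Finset.sum_fiberwise_of_maps_to hmaps1 w, ← Finset.sum_fiberwise_of_maps_to hmaps2 w,
    Finset.mul_sum, Finset.mul_sum]
  apply Finset.sum_congr rfl
  intro U hU
  obtain ⟨p₁, hp₁', hUp₁⟩ := Finset.mem_image.mp hU
  rw [Set.Finite.mem_toFinset] at hp₁'
  have hWU : W ≤ U := hUp₁ ▸ le_sup_left
  have hUrank : finrank F U = k + 1 := by rw [← hUp₁]; exact hφ p₁ hp₁'
  have hp₁U : p₁ ∈ S ∩ projPts U :=
    ⟨hp₁', show p₁.submodule ≤ U from hUp₁ ▸ le_sup_right⟩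
  have hfibiff : ∀ p, p ∈ S → (φ p = U ↔ p.submodule ≤ U) := by
    intro p hp
    constructor
    · intro h; rw [← h]; exact le_sup_right
    · intro h
      exact Submodule.eq_of_le_of_finrank_eq (sup_le hWU h) (by rw [hφ p hp, hUrank])
  have hfil1 : hsfin.toFinset.filter (fun p => φ p = U)
      = (S ∩ projPts U).toFinite.toFinset := by
    ext p
    rw [Finset.mem_filter, Set.Finite.mem_toFinset, Set.Finite.mem_toFinset,
      Set.mem_inter_iff]
    constructor
    · rintro ⟨hp, h⟩; exact ⟨hp, (hfibiff p hp).mp h⟩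
    · rintro ⟨hp, h⟩; exact ⟨hp, (hfibiff p hp).mpr h⟩
  have hfil2 : hsdfin.toFinset.filter (fun p => φ p = U)
      = ((S ∩ projPts U) \ projPts H).toFinite.toFinset := by
    ext p
    rw [Finset.mem_filter, Set.Finite.mem_toFinset, Set.Finite.mem_toFinset]
    constructor
    · rintro ⟨⟨hp, hpH⟩, h⟩; exact ⟨⟨hp, (hfibiff p hp).mp h⟩, hpH⟩
    · rintro ⟨⟨hp, hpU⟩, hpH⟩; exact ⟨⟨hp, hpH⟩, (hfibiff p hp).mpr hpU⟩
  have hconstU := hconst U hWU hUrank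
  have hsum1 : ∑ p ∈ (S ∩ projPts U).toFinite.toFinset, w p
      = (S ∩ projPts U).ncard * w p₁ := by
    calc ∑ p ∈ (S ∩ projPts U).toFinite.toFinset, w p
        = ∑ _p ∈ (S ∩ projPts U).toFinite.toFinset, w p₁ :=
          Finset.sum_congr rfl (fun p hp =>
            hconstU p (by rwa [Set.Finite.mem_toFinset] at hp) p₁ hp₁U)
      _ = (S ∩ projPts U).toFinite.toFinset.card * w p₁ := by
          rw [Finset.sum_const, smul_eq_mul]
      _ = (S ∩ projPts U).ncard * w p₁ := by
          rw [Set.ncard_eq_toFinset_card _ (S ∩ projPts U).toFinite]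
  have hsum2 : ∑ p ∈ ((S ∩ projPts U) \ projPts H).toFinite.toFinset, w p
      = ((S ∩ projPts U) \ projPts H).ncard * w p₁ := by
    calc ∑ p ∈ ((S ∩ projPts U) \ projPts H).toFinite.toFinset, w p
        = ∑ _p ∈ ((S ∩ projPts U) \ projPts H).toFinite.toFinset, w p₁ :=
          Finset.sum_congr rfl (fun p hp =>
            hconstU p (by rw [Set.Finite.mem_toFinset] at hp; exact hp.1) p₁ hp₁U)
      _ = ((S ∩ projPts U) \ projPts H).toFinite.toFinset.card * w p₁ := by
          rw [Finset.sum_const, smul_eq_mul]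
      _ = ((S ∩ projPts U) \ projPts H).ncard * w p₁ := by
          rw [Set.ncard_eq_toFinset_card _ ((S ∩ projPts U) \ projPts H).toFinite]
  -- counting
  have hUnotH : ¬ U ≤ H := fun h => hWH (hWU.trans h)
  have hUinfH : finrank F ↥(U ⊓ H) = k := by
    have := hinfH U hUnotH
    omega
  set e := finrank F ↥(W ⊓ H) with hedef
  have heW : e + 1 = k := by
    have := hinfH W hWH
    omega
  have hps1 : S ∩ projPts U
      = {p : Projectivization F V | p.submodule ≤ U ∧ ¬ p.submodule ≤ W} := by
    rw [hS]
    ext p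
    simp only [Set.mem_inter_iff, Set.mem_diff, Set.mem_univ, true_and, projPts,
      Set.mem_setOf_eq]
    tauto
  have hps2 : (S ∩ projPts U) ∩ projPts H
      = {p : Projectivization F V | p.submodule ≤ U ⊓ H ∧ ¬ p.submodule ≤ W} := by
    rw [hS]
    ext p
    simp only [Set.mem_inter_iff, Set.mem_diff, Set.mem_univ, true_and, projPts,
      Set.mem_setOf_eq, le_inf_iff]
    tauto
  set b := (S ∩ projPts U).ncard with hbdef
  set a := ((S ∩ projPts U) ∩ projPts H).ncard with hadef
  set d := ((S ∩ projPts U) \ projPts H).ncard with hddef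
  have hdab : a + d = b :=
    Set.ncard_inter_add_ncard_diff_eq_ncard (S ∩ projPts U) (projPts H)
  have hbcount : b * m + (m + 1) ^ k = (m + 1) ^ (k + 1) := by
    have hc := proj_count U W
    rw [inf_eq_right.mpr hWU, hk, hUrank, hq, hm, Nat.add_sub_cancel, ← hps1, ← hbdef] at hc
    exact hc
  have hacount : a * m + (m + 1) ^ e = (m + 1) ^ k := by
    have hiden : (U ⊓ H) ⊓ W = W ⊓ H :=
      le_antisymm (le_inf inf_le_right (inf_le_left.trans inf_le_right))
        (le_inf (le_inf (inf_le_left.trans hWU) inf_le_right) inf_le_left)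
    have hc := proj_count (U ⊓ H) W
    rw [hiden, ← hedef, hUinfH, hq, hm, Nat.add_sub_cancel, ← hps2, ← hadef] at hc
    exact hc
  -- derive b = a * (m+1) and d = a * m
  have hb : b = (m + 1) ^ k := by
    have h1 : (m + 1) ^ (k + 1) = (m + 1) ^ k * m + (m + 1) ^ k := by ring
    have h2 : b * m = (m + 1) ^ k * m := by omega
    exact Nat.eq_of_mul_eq_mul_right (by omega) h2
  have ha : a = (m + 1) ^ e := by
    have h1 : (m + 1) ^ k = (m + 1) ^ e * m + (m + 1) ^ e := by
      rw [← heW]; ring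
    have h2 : a * m = (m + 1) ^ e * m := by omega
    exact Nat.eq_of_mul_eq_mul_right (by omega) h2
  have hbam : b = a * (m + 1) := by
    rw [hb, ha, ← heW]; ring
  have hd : d = a * m := by
    have h1 : a * (m + 1) = a * m + a := by ring
    omega
  rw [hfil1, hfil2, hsum1, hsum2, hm, Nat.add_sub_cancel, hd, hbam]
  ring
end

section
/- Let F be a finite field with |F| = q, let V be an F-vector space of finite dimension r ≥ 1, let S ⊆ ℙ(V) be a set of projective points that spans V with S ≠ ℙ(V), and let w : S → ℕ satisfy w(p) ≥ 1 for all p ∈ S. If q·g*_w(S) = (q − 1)·w(S), then the complement ℙ(V) ∖ S is the point set of a subspace: there exists a subspace W ≤ V with 1 ≤ dim W < r such that ℙ(V) ∖ S = pts(W). -/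
open Set Module

/-- geometric counter -/
def gth (q : ℕ) : ℕ → ℕ
  | 0 => 0
  | (k+1) => q * gth q k + 1

lemma gth_succ (q k : ℕ) : gth q (k+1) = q * gth q k + 1 := rfl

lemma gth_succ' (q k : ℕ) : gth q (k+1) = gth q k + q ^ k := by
  induction k with
  | zero => simp [gth]
  | succ n ih =>
    rw [gth_succ, ih, show q * (gth q n + q ^ n) + 1 = (q * gth q n + 1) + q ^ (n+1) by ring,
      ← gth_succ, ih]

lemma gth_mul (q k : ℕ) (hq : 1 ≤ q) : (q - 1) * gth q k = q ^ k - 1 := by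
  induction k with
  | zero => simp [gth]
  | succ n ih =>
    have h3 : (q-1)*(q * gth q n + 1) = q*((q-1)*gth q n) + (q-1) := by ring
    rw [gth_succ, h3, ih]
    have h1 : 1 ≤ q ^ n := Nat.one_le_pow _ _ hq
    have h4 : q * (q ^ n - 1) + q = q * q ^ n := by
      rw [← Nat.mul_succ]; congr 1; omega
    have h5 : q * q ^ n = q ^ (n+1) := by ring
    omega

open Projectivization in
lemma fiber_equiv_units {F V : Type*} [Field F] [AddCommGroup V] [Module F V]
    (p : Projectivization F V) :
    Nonempty ({v : {v : V // v ≠ 0} // Projectivization.mk' F v = p} ≃ Fˣ) := by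
  refine ⟨(Equiv.ofBijective
    (fun a : Fˣ => (⟨⟨(a : F) • p.rep, smul_ne_zero a.ne_zero p.rep_nonzero⟩, ?_⟩ :
      {v : {v : V // v ≠ 0} // Projectivization.mk' F v = p})) ⟨?_, ?_⟩).symm⟩
  · rw [mk'_eq_mk]
    conv_rhs => rw [← p.mk_rep]
    exact (mk_eq_mk_iff' F _ _ _ p.rep_nonzero).mpr ⟨(a : F), rfl⟩
  · intro a b hab
    have h : (a : F) • p.rep = (b : F) • p.rep := by
      simpa using congrArg (fun x => (x.1 : V)) hab
    have := sub_smul (a : F) b p.rep ▸ sub_eq_zero_of_eq h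
    ext
    have h2 := (smul_eq_zero.mp this).resolve_right p.rep_nonzero
    exact sub_eq_zero.mp h2
  · rintro ⟨⟨v, hv⟩, hmk⟩
    rw [mk'_eq_mk] at hmk
    rw [← p.mk_rep, mk_eq_mk_iff] at hmk
    obtain ⟨a, ha⟩ := hmk
    exact ⟨a, by ext; simpa [Units.smul_def] using ha⟩

lemma card_projectivization {F V : Type*} [Field F] [Fintype F] [AddCommGroup V] [Module F V]
    [FiniteDimensional F V] [Fintype V] [Fintype (Projectivization F V)] :
    Fintype.card (Projectivization F V) = gth (Fintype.card F) (finrank F V) := by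
  classical
  have hq : 1 ≤ Fintype.card F := Fintype.card_pos
  have key : (Fintype.card F - 1) * Fintype.card (Projectivization F V)
      = Fintype.card F ^ finrank F V - 1 := by
    have h1 : Fintype.card {v : V // v ≠ 0} = Fintype.card V - 1 := by
      have := Fintype.card_subtype_compl (fun v : V => v = 0)
      simpa [Fintype.card_subtype_eq] using this
    have h2 : Fintype.card V = Fintype.card F ^ finrank F V := card_eq_pow_finrank
    have h4 := Fintype.card_congr (Equiv.sigmaFiberEquiv (Projectivization.mk' F (V := V))).symm
    rw [Fintype.card_sigma] at h4
    have h5 : ∀ p : Projectivization F V,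
        Fintype.card {v : {v : V // v ≠ 0} // Projectivization.mk' F v = p}
          = Fintype.card F - 1 := by
      intro p
      obtain ⟨e⟩ := fiber_equiv_units p
      rw [Fintype.card_congr e, Fintype.card_units]
    simp only [h5] at h4
    rw [Finset.sum_const, Finset.card_univ, smul_eq_mul, mul_comm] at h4
    rw [← h4, h1, h2]
  have := gth_mul (Fintype.card F) (finrank F V) hq
  have hpos : 0 < Fintype.card F - 1 := by
    have : 2 ≤ Fintype.card F := Fintype.one_lt_card
    omega
  exact Nat.eq_of_mul_eq_mul_left hpos (by rw [key, this])

section Dual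
variable {F V : Type*} [Field F] [AddCommGroup V] [Module F V] [FiniteDimensional F V]

lemma finrank_ker_dual (f : Module.Dual F V) (hf : f ≠ 0) :
    finrank F (LinearMap.ker f) = finrank F V - 1 := by
  have h := LinearMap.finrank_range_add_finrank_ker f
  have hrange : finrank F (LinearMap.range f) = 1 := by
    have hle : finrank F (LinearMap.range f) ≤ 1 := by
      simpa using Submodule.finrank_le (LinearMap.range f)
    have hne : LinearMap.range f ≠ ⊥ := fun hb => hf (LinearMap.range_eq_bot.mp hb)
    have hpos : 0 < finrank F (LinearMap.range f) := by
      rw [Module.finrank_pos_iff]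
      exact Submodule.nontrivial_iff_ne_bot.mpr hne
    omega
  omega

lemma exists_dual_ker (H : Submodule F V) (hr1 : 1 ≤ finrank F V)
    (hH : finrank F H = finrank F V - 1) :
    ∃ f : Module.Dual F V, f ≠ 0 ∧ LinearMap.ker f = H := by
  have hq := Submodule.finrank_quotient_add_finrank H
  have hle : finrank F H ≤ finrank F V := Submodule.finrank_le H
  have h1 : finrank F (V ⧸ H) = 1 := by omega
  have h1' : finrank F (V ⧸ H) = finrank F F := by rw [h1, finrank_self]
  obtain e := LinearEquiv.ofFinrankEq (V ⧸ H) F h1'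
  refine ⟨e.toLinearMap ∘ₗ H.mkQ, ?_, ?_⟩
  · intro hzero
    have hmk : ∀ v : V, H.mkQ v = 0 := by
      intro v
      have h0 := LinearMap.congr_fun hzero v
      simp only [LinearMap.comp_apply, LinearMap.zero_apply, LinearEquiv.coe_coe] at h0
      exact e.map_eq_zero_iff.mp h0
    have htop : H = ⊤ := by
      rw [eq_top_iff]
      intro v _
      exact (Submodule.Quotient.mk_eq_zero H).mp (hmk v)
    rw [htop, finrank_top] at hH
    omega
  · rw [LinearMap.ker_comp, LinearEquiv.ker, Submodule.comap_bot, Submodule.ker_mkQ]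

lemma dual_prop_of_ker_le_ker {f g : Module.Dual F V} (hf : f ≠ 0)
    (h : LinearMap.ker f ≤ LinearMap.ker g) : ∃ c : F, g = c • f := by
  obtain ⟨x, hx⟩ : ∃ x, f x ≠ 0 := by
    by_contra hc
    push_neg at hc
    exact hf (LinearMap.ext fun v => by simpa using hc v)
  refine ⟨g x / f x, ?_⟩
  ext v
  have hker : v - (f v / f x) • x ∈ LinearMap.ker f := by
    rw [LinearMap.mem_ker, map_sub, map_smul, smul_eq_mul, div_mul_cancel₀ _ hx, sub_self]
  have hg : g (v - (f v / f x) • x) = 0 := h hker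
  rw [map_sub, map_smul, sub_eq_zero, smul_eq_mul] at hg
  rw [LinearMap.smul_apply, smul_eq_mul, hg]
  ring

end Dual

open Projectivization in
lemma count_hyperplanes {F V : Type*} [Field F] [Fintype F] [AddCommGroup V] [Module F V]
    [FiniteDimensional F V] [Fintype (Submodule F V)] (hr1 : 1 ≤ finrank F V)
    (U : Submodule F V) [DecidablePred fun H : Submodule F V =>
      finrank F H = finrank F V - 1 ∧ U ≤ H] :
    (Finset.univ.filter fun H : Submodule F V =>
        finrank F H = finrank F V - 1 ∧ U ≤ H).card
      = gth (Fintype.card F) (finrank F V - finrank F U) := by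
  classical
  set A : Submodule F (Module.Dual F V) := U.dualAnnihilator with hA
  have hfinA : finrank F A = finrank F V - finrank F U := by
    have e := Subspace.quotEquivAnnihilator U
    have h1 : finrank F (V ⧸ U) = finrank F A := e.finrank_eq
    have h2 := Submodule.finrank_quotient_add_finrank U
    have h3 : finrank F U ≤ finrank F V := Submodule.finrank_le U
    omega
  -- the equivalence between ℙ(A) and hyperplanes containing U
  have hFinV : Finite V := Module.finite_of_finite F
  have : Fintype V := Fintype.ofFinite V
  have hFinD : Finite (Module.Dual F V) := Module.finite_of_finite F
  have : Fintype (Module.Dual F V) := Fintype.ofFinite _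
  have : Fintype A := Fintype.ofFinite _
  have hFinP : Finite (Projectivization F A) := Quotient.finite _
  have : Fintype (Projectivization F A) := Fintype.ofFinite _
  have hrepne : ∀ p : Projectivization F A, (p.rep : Module.Dual F V) ≠ 0 := by
    intro p hc
    exact p.rep_nonzero (Subtype.coe_injective (by simpa using hc))
  let Φ : Projectivization F A → {H : Submodule F V // finrank F H = finrank F V - 1 ∧ U ≤ H} :=
    fun p => ⟨LinearMap.ker (p.rep : Module.Dual F V),
      finrank_ker_dual _ (hrepne p),
      fun u hu => by
        have hz := (Submodule.mem_dualAnnihilator _).mp (p.rep).2 u hu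
        exact LinearMap.mem_ker.mpr hz⟩
  have hbij : Function.Bijective Φ := by
    constructor
    · intro p₁ p₂ hΦ
      have hker : LinearMap.ker ((p₁.rep : Module.Dual F V))
          = LinearMap.ker ((p₂.rep : Module.Dual F V)) := congrArg Subtype.val hΦ
      obtain ⟨c, hc⟩ := dual_prop_of_ker_le_ker (hrepne p₁) hker.le
      have hcne : c ≠ 0 := by
        intro h0
        exact hrepne p₂ (by rw [hc, h0, zero_smul])
      have hcsub : (p₂.rep : A) = c • (p₁.rep : A) := by
        apply Subtype.coe_injective
        simpa using hc
      conv_lhs => rw [← p₁.mk_rep]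
      conv_rhs => rw [← p₂.mk_rep]
      rw [mk_eq_mk_iff']
      exact ⟨c⁻¹, by rw [hcsub, smul_smul, inv_mul_cancel₀ hcne, one_smul]⟩
    · rintro ⟨H, hH, hUH⟩
      obtain ⟨f, hf0, hfker⟩ := exists_dual_ker H hr1 hH
      have hfA : f ∈ A := by
        rw [hA, Submodule.mem_dualAnnihilator]
        intro u hu
        have : u ∈ LinearMap.ker f := hfker ▸ hUH hu
        simpa [LinearMap.mem_ker] using this
      have hfne : (⟨f, hfA⟩ : A) ≠ 0 := by
        intro h0
        exact hf0 (by simpa using congrArg Subtype.val h0)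
      refine ⟨Projectivization.mk F (⟨f, hfA⟩ : A) hfne, ?_⟩
      obtain ⟨a, ha⟩ := exists_smul_eq_mk_rep F (⟨f, hfA⟩ : A) hfne
      apply Subtype.coe_injective
      show LinearMap.ker ((Projectivization.mk F (⟨f, hfA⟩ : A) hfne).rep : Module.Dual F V) = H
      rw [← ha]
      rw [show ((a • (⟨f, hfA⟩ : A) : A) : Module.Dual F V) = (a : F) • f by
          simp [Units.smul_def],
        LinearMap.ker_smul _ _ a.ne_zero, hfker]
  have hcard := Fintype.card_congr (Equiv.ofBijective Φ hbij)
  rw [Fintype.card_subtype] at hcard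
  rw [← hcard, card_projectivization, hfinA]

open Projectivization in
lemma finrank_sup_points {F V : Type*} [Field F] [AddCommGroup V] [Module F V]
    [FiniteDimensional F V] {p p' : Projectivization F V} (h : p ≠ p') :
    finrank F ((p.submodule ⊔ p'.submodule : Submodule F V)) = 2 := by
  have hne : p.submodule ≠ p'.submodule := fun hc => h (Projectivization.submodule_injective hc)
  have ha : finrank F p.submodule = 1 := p.finrank_submodule
  have hb : finrank F p'.submodule = 1 := p'.finrank_submodule
  have hinf : p.submodule ⊓ p'.submodule = ⊥ := by
    by_contra hc
    have hpos : 0 < finrank F (p.submodule ⊓ p'.submodule : Submodule F V) := by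
      rw [Module.finrank_pos_iff]
      exact Submodule.nontrivial_iff_ne_bot.mpr hc
    have h1 : p.submodule ⊓ p'.submodule = p.submodule :=
      Submodule.eq_of_le_of_finrank_le inf_le_left (by omega)
    have h2 : p.submodule ⊓ p'.submodule = p'.submodule :=
      Submodule.eq_of_le_of_finrank_le inf_le_right (by omega)
    exact hne (h1 ▸ h2)
  have := Submodule.finrank_sup_add_finrank_inf_eq p.submodule p'.submodule
  rw [hinf, finrank_bot, ha, hb] at this
  omega

/-- If a spanning set `S ⊊ ℙ(V)` of projective points over `GF(q)` with positive weights
satisfies `q·g*_w(S) = (q-1)·w(S)`, then the complement of `S` in `ℙ(V)` is the point set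
of a subspace `W` with `1 ≤ dim W < r`. -/
theorem proj_weighted_cogirth_equality_complement_subspace {F V : Type*} [Field F]
    [Fintype F] [AddCommGroup V] [Module F V] [FiniteDimensional F V]
    (q r : ℕ) (hq : Fintype.card F = q) (hr : finrank F V = r) (hr1 : 1 ≤ r)
    (S : Set (Projectivization F V))
    (hspan : Submodule.span F (Projectivization.rep '' S) = ⊤)
    (hne : S ≠ Set.univ)
    (w : Projectivization F V → ℕ) (hw : ∀ p ∈ S, 1 ≤ w p)
    (heq : q * projCogirthW S w = (q - 1) * projWeight S w) :
    ∃ W : Submodule F V, 1 ≤ finrank F W ∧ finrank F W < r ∧ Set.univ \ S = projPts W := by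
  classical
  subst hq
  subst hr
  set q := Fintype.card F with hqdef
  set r := finrank F V with hrdef
  have hq2 : 2 ≤ q := Fintype.one_lt_card
  -- finiteness
  have hFinV : Finite V := Module.finite_of_finite F
  have : Fintype V := Fintype.ofFinite V
  have hFinSub : Finite (Submodule F V) :=
    Finite.of_injective (fun H : Submodule F V => (H : Set V)) SetLike.coe_injective
  have : Fintype (Submodule F V) := Fintype.ofFinite _
  have hFinP : Finite (Projectivization F V) := Quotient.finite _
  have : Fintype (Projectivization F V) := Fintype.ofFinite _
  -- basic objects
  have hS : S.Finite := Set.toFinite S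
  set Sf : Finset (Projectivization F V) := hS.toFinset with hSf
  have hmemSf : ∀ p, p ∈ Sf ↔ p ∈ S := fun p => hS.mem_toFinset
  set Wn : ℕ := ∑ p ∈ Sf, w p with hWn
  have hWeq : projWeight S w = Wn := by
    rw [projWeight, ← hS.coe_toFinset, finsum_mem_coe_finset]
  set wint : Submodule F V → ℕ := fun H => ∑ p ∈ Sf, if p.submodule ≤ H then w p else 0
    with hwint
  set wco : Submodule F V → ℕ := fun H => ∑ p ∈ Sf, if p.submodule ≤ H then 0 else w p
    with hwco
  have hdiff : ∀ H : Submodule F V, projWeight (S \ projPts H) w = wco H := by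
    intro H
    have hXfin : (S \ projPts H).Finite := Set.toFinite _
    have hXeq : S \ projPts H = ↑(Sf.filter fun p => ¬ p.submodule ≤ H) := by
      ext p
      simp only [Finset.coe_filter, mem_diff, Set.mem_setOf_eq, Finset.mem_coe, hmemSf]
      rfl
    rw [projWeight, hXeq, finsum_mem_coe_finset, Finset.sum_filter]
    simp only [hwco]
    exact Finset.sum_congr rfl fun p _ => by split <;> simp_all
  have hsplit : ∀ H : Submodule F V, wint H + wco H = Wn := by
    intro H
    rw [hwint, hwco, ← Finset.sum_add_distrib]
    refine Finset.sum_congr rfl fun p _ => by split <;> simp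
  set g : ℕ := projCogirthW S w with hg
  have hgle : ∀ H : Submodule F V, finrank F H = r - 1 → g ≤ wco H := by
    intro H hH
    rw [← hdiff H]
    exact Nat.sInf_le ⟨H, hH, rfl⟩
  -- hyperplane finsets
  set hyp : Finset (Submodule F V) := Finset.univ.filter fun H => finrank F H = r - 1
    with hhyp
  set hypP : Projectivization F V → Finset (Submodule F V) :=
    fun p => hyp.filter fun H => p.submodule ≤ H with hhypP
  have c0 : hyp.card = gth q r := by
    have := count_hyperplanes (F := F) (V := V) hr1 ⊥
    rw [finrank_bot, Nat.sub_zero, ← hqdef, ← hrdef] at this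
    rw [hhyp, ← this]
    congr 1
    apply Finset.filter_congr
    intro H _
    simp
  have c1 : ∀ p : Projectivization F V, (hypP p).card = gth q (r - 1) := by
    intro p
    have := count_hyperplanes (F := F) (V := V) hr1 p.submodule
    rw [p.finrank_submodule, ← hqdef, ← hrdef] at this
    simp only [hhypP, hhyp]
    rw [Finset.filter_filter, ← this]
  have c2 : ∀ p p' : Projectivization F V, p ≠ p' →
      ((hypP p).filter fun H => p'.submodule ≤ H).card = gth q (r - 2) := by
    intro p p' hpp'
    have := count_hyperplanes (F := F) (V := V) hr1 (p.submodule ⊔ p'.submodule)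
    rw [finrank_sup_points hpp', ← hqdef, ← hrdef] at this
    simp only [hhypP, hhyp]
    rw [Finset.filter_filter, Finset.filter_filter, ← this]
    congr 1
    apply Finset.filter_congr
    intro H _
    simp [sup_le_iff, and_assoc]
  -- double counting
  have hdc : ∀ hs : Finset (Submodule F V),
      ∑ H ∈ hs, wint H = ∑ p ∈ Sf, w p * (hs.filter fun H => p.submodule ≤ H).card := by
    intro hs
    rw [hwint, Finset.sum_comm]
    refine Finset.sum_congr rfl fun p _ => ?_
    rw [← Finset.sum_filter, Finset.sum_const, smul_eq_mul, mul_comm]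
  have hA : ∑ H ∈ hyp, wint H = Wn * gth q (r - 1) := by
    rw [hdc hyp, hWn, Finset.sum_mul]
    exact Finset.sum_congr rfl fun p _ => by rw [← c1 p, hhypP]
  have hB : ∀ p0 : Projectivization F V, ∑ H ∈ hypP p0, wint H
      = ∑ p ∈ Sf, w p * (if p = p0 then gth q (r-1) else gth q (r-2)) := by
    intro p0
    rw [hdc (hypP p0)]
    refine Finset.sum_congr rfl fun p _ => ?_
    congr 1
    by_cases hp : p = p0
    · subst hp
      rw [if_pos rfl, ← c1 p]
      congr 1
      rw [hhypP, Finset.filter_filter]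
      apply Finset.filter_congr
      intro H _
      simp
    · rw [if_neg hp, ← c2 p0 p (fun hc => hp hc.symm)]
  -- nonemptiness facts
  have hVnt : Nontrivial V := by
    have : 0 < finrank F V := by omega
    exact Module.finrank_pos_iff.mp this
  have hSne : S.Nonempty := by
    rcases S.eq_empty_or_nonempty with hS0 | hS0
    · exfalso
      rw [hS0, Set.image_empty, Submodule.span_empty] at hspan
      exact bot_ne_top hspan
    · exact hS0
  obtain ⟨ps, hps⟩ := hSne
  obtain ⟨pt, hpt⟩ : ∃ p : Projectivization F V, p ∉ S := by
    by_contra hc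
    push_neg at hc
    exact hne (Set.eq_univ_of_forall hc)
  have hpst : ps ≠ pt := fun hc => hpt (hc ▸ hps)
  have hr2 : 2 ≤ r := by
    have h2 := finrank_sup_points hpst
    have hle := Submodule.finrank_le (ps.submodule ⊔ pt.submodule)
    rw [h2, ← hrdef] at hle
    exact hle
  obtain ⟨r2, hr2eq⟩ : ∃ r2, r = r2 + 2 := ⟨r - 2, by omega⟩
  have hWpos : 1 ≤ Wn := by
    calc 1 ≤ w ps := hw ps hps
    _ ≤ Wn := Finset.single_le_sum (fun p _ => Nat.zero_le (w p)) ((hmemSf ps).mpr hps)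
  -- a hyperplane exists
  have hhypne : hyp.Nonempty := by
    rw [← Finset.card_pos, c0, hr2eq, gth_succ]
    omega
  obtain ⟨Hs, hHs⟩ := hhypne
  have hgW : g ≤ Wn := by
    have h1 := hgle Hs (by simpa [hhyp] using hHs)
    have h2 := hsplit Hs
    omega
  set m : ℕ := Wn - g with hm
  have hWm : Wn = q * m := by
    have e1 : q * m + q * g = q * Wn := by
      rw [← Nat.mul_add, hm, Nat.sub_add_cancel hgW]
    have e2 : (q - 1 + 1) * Wn = (q - 1) * Wn + Wn := by ring
    have e3 : q - 1 + 1 = q := by omega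
    rw [hWeq] at heq
    rw [heq] at e1
    rw [e3] at e2
    linarith
  have hIntLe : ∀ H ∈ hyp, wint H ≤ m := by
    intro H hH
    have h1 := hgle H (by simpa [hhyp] using hH)
    have h2 := hsplit H
    omega
  have hm1 : 1 ≤ m := by
    rcases Nat.eq_zero_or_pos m with h0 | h1
    · rw [h0, Nat.mul_zero] at hWm; omega
    · exact h1
  -- geometric series facts
  have hr1e : r - 1 = r2 + 1 := by omega
  have hr2e : r - 2 = r2 := by omega
  have t2 : gth q r = q * gth q (r - 1) + 1 := by rw [hr1e, hr2eq]; rfl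
  have t1 : gth q (r - 1) = q * gth q (r - 2) + 1 := by rw [hr1e, hr2e]; rfl
  have t1' : gth q (r - 1) = gth q (r - 2) + q ^ (r - 2) := by
    rw [hr1e, hr2e]; have := gth_succ' q r2; rw [this]
  -- main identities
  have E1 : (∑ H ∈ hyp, wint H) + m = hyp.card * m := by
    rw [hA, c0, t2, hWm]; ring
  set wS : Projectivization F V → ℕ := fun p0 => if p0 ∈ Sf then w p0 else 0 with hwS
  have E2 : ∀ p0 : Projectivization F V,
      (∑ H ∈ hypP p0, wint H) + m = (hypP p0).card * m + wS p0 * q ^ (r - 2) := by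
    intro p0
    have step : ∑ H ∈ hypP p0, wint H
        = Wn * gth q (r - 2) + wS p0 * q ^ (r - 2) := by
      rw [hB p0]
      have hterm : ∀ p ∈ Sf, w p * (if p = p0 then gth q (r-1) else gth q (r-2))
          = w p * gth q (r-2) + (if p = p0 then w p * q ^ (r-2) else 0) := by
        intro p _
        by_cases h : p = p0
        · rw [if_pos h, if_pos h, t1']; ring
        · rw [if_neg h, if_neg h]; ring
      rw [Finset.sum_congr rfl hterm, Finset.sum_add_distrib, Finset.sum_ite_eq' Sf p0,
        hWn, Finset.sum_mul, hwS]
      by_cases h : p0 ∈ Sf <;> simp [h]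
    rw [step, c1 p0, t1, hWm]; ring
  -- all-slack-is-m on subsets forced by equality
  have hforce : ∀ hs : Finset (Submodule F V), hs ⊆ hyp →
      (∑ H ∈ hs, wint H) = hs.card * m → ∀ H ∈ hs, wint H = m := by
    intro hs hsub hsum H hH
    by_contra hlt
    have hlt' : wint H < m := lt_of_le_of_ne (hIntLe H (hsub hH)) hlt
    have : ∑ H ∈ hs, wint H < ∑ _H ∈ hs, m :=
      Finset.sum_lt_sum (fun x hx => hIntLe x (hsub hx)) ⟨H, hH, hlt'⟩
    rw [Finset.sum_const, smul_eq_mul] at this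
    exact absurd hsum (ne_of_lt this)
  have hDsum : ∀ p0 : Projectivization F V, p0 ∉ S →
      ∀ H ∈ hyp \ hypP p0, wint H = m := by
    intro p0 hp0
    have hsub : hypP p0 ⊆ hyp := Finset.filter_subset _ _
    have hWS0 : wS p0 = 0 := by
      rw [hwS]
      simp only [hmemSf]
      rw [if_neg hp0]
    have e2 := E2 p0
    rw [hWS0, Nat.zero_mul, Nat.add_zero] at e2
    have hsd : (∑ H ∈ hyp \ hypP p0, wint H) + ∑ H ∈ hypP p0, wint H
        = ∑ H ∈ hyp, wint H := Finset.sum_sdiff hsub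
    have hcd : (hyp \ hypP p0).card + (hypP p0).card = hyp.card := by
      rw [Finset.card_sdiff_of_subset hsub]
      have := Finset.card_le_card hsub
      omega
    apply hforce _ (Finset.sdiff_subset)
    have expand : ((hyp \ hypP p0).card + (hypP p0).card) * m
        = (hyp \ hypP p0).card * m + (hypP p0).card * m := by ring
    rw [← hcd, expand] at E1
    omega
  -- slack hyperplanes
  set hypS : Finset (Submodule F V) := hyp.filter fun H => wint H < m with hhypS
  have hstar : ∀ p0 : Projectivization F V, p0 ∉ S → ∀ H ∈ hypS, p0.submodule ≤ H := by
    intro p0 hp0 H hH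
    rw [hhypS, Finset.mem_filter] at hH
    obtain ⟨hH1, hH2⟩ := hH
    by_contra hc
    have hmem : H ∈ hyp \ hypP p0 :=
      Finset.mem_sdiff.mpr ⟨hH1, fun hc2 => hc (Finset.mem_filter.mp hc2).2⟩
    exact absurd (hDsum p0 hp0 H hmem) (by omega)
  have hypSne : hypS.Nonempty := by
    by_contra hc
    rw [Finset.not_nonempty_iff_eq_empty, hhypS, Finset.filter_eq_empty_iff] at hc
    push_neg at hc
    have hall : ∀ H ∈ hyp, wint H = m := fun H hH =>
      le_antisymm (hIntLe H hH) (hc hH)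
    have : ∑ H ∈ hyp, wint H = hyp.card * m := by
      rw [Finset.sum_congr rfl hall, Finset.sum_const, smul_eq_mul, mul_comm]
    omega
  obtain ⟨H0, hH0⟩ := hypSne
  set W0 : Submodule F V := hypS.inf id with hW0
  have hTsub : ∀ p0 : Projectivization F V, p0 ∉ S → p0.submodule ≤ W0 :=
    fun p0 hp0 => Finset.le_inf fun H hH => hstar p0 hp0 H hH
  have hSnot : ∀ p ∈ S, ¬ p.submodule ≤ W0 := by
    intro p hp hle
    -- there is a slack hyperplane avoiding p
    have hwp : 1 ≤ w p := hw p hp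
    have hq1 : 1 ≤ q ^ (r - 2) := Nat.one_le_pow _ _ (by omega)
    have hwq : 1 ≤ w p * q ^ (r - 2) := Nat.one_le_iff_ne_zero.mpr (by positivity)
    have hWSp : wS p = w p := by
      rw [hwS]; simp only [hmemSf]; rw [if_pos hp]
    have hex : ∃ H1 ∈ hyp \ hypP p, wint H1 < m := by
      by_contra hc
      push_neg at hc
      have hall : ∀ H ∈ hyp \ hypP p, wint H = m := fun H hH =>
        le_antisymm (hIntLe H (Finset.sdiff_subset hH)) (hc H hH)
      have hDsum' : ∑ H ∈ hyp \ hypP p, wint H = (hyp \ hypP p).card * m := by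
        rw [Finset.sum_congr rfl hall, Finset.sum_const, smul_eq_mul, mul_comm]
      have hsub : hypP p ⊆ hyp := Finset.filter_subset _ _
      have hsd : (∑ H ∈ hyp \ hypP p, wint H) + ∑ H ∈ hypP p, wint H
          = ∑ H ∈ hyp, wint H := Finset.sum_sdiff hsub
      have hcd : (hyp \ hypP p).card + (hypP p).card = hyp.card := by
        rw [Finset.card_sdiff_of_subset hsub]
        have := Finset.card_le_card hsub
        omega
      have e2 := E2 p
      rw [hWSp] at e2
      have expand : ((hyp \ hypP p).card + (hypP p).card) * m
          = (hyp \ hypP p).card * m + (hypP p).card * m := by ring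
      rw [← hcd, expand] at E1
      omega
    obtain ⟨H1, hH1mem, hH1lt⟩ := hex
    rw [Finset.mem_sdiff] at hH1mem
    have hH1S : H1 ∈ hypS := by
      rw [hhypS, Finset.mem_filter]
      exact ⟨hH1mem.1, hH1lt⟩
    have hW0le : W0 ≤ H1 := Finset.inf_le hH1S
    have : H1 ∈ hypP p := by
      rw [hhypP, Finset.mem_filter]
      exact ⟨hH1mem.1, le_trans hle hW0le⟩
    exact hH1mem.2 this
  -- conclusion
  refine ⟨W0, ?_, ?_, ?_⟩
  · have hmem : pt.rep ∈ W0 := by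
      have h1 : pt.rep ∈ pt.submodule := by
        rw [Projectivization.submodule_eq]
        exact Submodule.mem_span_singleton_self _
      exact hTsub pt hpt h1
    have hne0 : W0 ≠ ⊥ := by
      intro hb
      rw [hb, Submodule.mem_bot] at hmem
      exact pt.rep_nonzero hmem
    have : 0 < finrank F W0 := by
      rw [Module.finrank_pos_iff]
      exact Submodule.nontrivial_iff_ne_bot.mpr hne0
    omega
  · have hW0le : W0 ≤ H0 := Finset.inf_le hH0
    have hH0hyp : H0 ∈ hyp := (Finset.mem_filter.mp hH0).1
    have hH0rank : finrank F H0 = r - 1 := by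
      rw [hhyp, Finset.mem_filter] at hH0hyp
      exact hH0hyp.2
    have := Submodule.finrank_mono hW0le
    omega
  · ext p
    simp only [Set.mem_diff, Set.mem_univ, true_and, projPts, Set.mem_setOf_eq]
    constructor
    · exact fun hp => hTsub p hp
    · intro hp hpS
      exact hSnot p hpS hp
end

section
/- Let q be a prime power, let r ≥ 1, let M be a finite simple matroid of rank r that is representable over GF(q) and is not isomorphic to the projective geometry PG(r−1,q) (equivalently, |E(M)| < (q^r − 1)/(q − 1)), and let w : E(M) → ℕ be a weight function with w(e) ≥ 1 for every e. If q·g*_w(M) = (q − 1)·w(E(M)), then q^{r−1}·w(e) ≤ w(E(M)) for every e ∈ E(M). -/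
open Set

open Module Submodule

lemma aux_card_ker {F : Type*} [Field F] [Fintype F] {V U : Type*} [AddCommGroup V] [Module F V]
    [FiniteDimensional F V] [Fintype V] [AddCommGroup U] [Module F U] [FiniteDimensional F U]
    (ψ : V →ₗ[F] U) (hs : Function.Surjective ψ) :
    Nat.card {x : V // ψ x = 0} = Fintype.card F ^ (finrank F V - finrank F U) := by
  classical
  have h0 : Nat.card {x : V // ψ x = 0} = Nat.card (LinearMap.ker ψ) :=
    Nat.card_congr (Equiv.subtypeEquivRight (fun x => (LinearMap.mem_ker).symm))
  have h1 : Fintype.card (LinearMap.ker ψ) = Fintype.card F ^ (finrank F (LinearMap.ker ψ)) :=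
    card_eq_pow_finrank
  have h2 : finrank F (LinearMap.range ψ) + finrank F (LinearMap.ker ψ) = finrank F V :=
    LinearMap.finrank_range_add_finrank_ker ψ
  rw [LinearMap.range_eq_top.2 hs, finrank_top] at h2
  have h3 : finrank F U ≤ finrank F V := by omega
  rw [h0, Nat.card_eq_fintype_card, h1]
  congr 1
  omega

lemma aux_dual_pair {F V : Type*} [Field F] [AddCommGroup V] [Module F V]
    {x y : V} (h : y ∉ Submodule.span F {x}) :
    ∃ φ : Module.Dual F V, φ y = 1 ∧ φ x = 0 := by
  obtain ⟨f, hfy, hfmap⟩ := (Submodule.span F {x}).exists_dual_map_eq_bot_of_notMem h inferInstance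
  have hfx : f x = 0 := by
    have hm : f x ∈ (Submodule.span F {x}).map f :=
      Submodule.mem_map_of_mem (Submodule.mem_span_singleton_self x)
    rwa [hfmap, Submodule.mem_bot] at hm
  exact ⟨(f y)⁻¹ • f, by simp [inv_mul_cancel₀ hfy], by simp [hfx]⟩

lemma aux_dual_ne {F V : Type*} [Field F] [AddCommGroup V] [Module F V]
    {x : V} (h : x ≠ 0) : ∃ φ : Module.Dual F V, φ x = 1 := by
  have : ¬ ∀ φ : Module.Dual F V, φ x = 0 := by
    rw [Module.forall_dual_apply_eq_zero_iff]; exact h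
  push_neg at this
  obtain ⟨φ, hφ⟩ := this
  exact ⟨(φ x)⁻¹ • φ, by simp [inv_mul_cancel₀ hφ]⟩
section
set_option linter.unusedSectionVars false
variable {F : Type*} [Field F] [Fintype F] {W : Type*} [AddCommGroup W] [Module F W]
    [FiniteDimensional F W]

noncomputable def ev1 (x : W) : Module.Dual F W →ₗ[F] F where
  toFun φ := φ x
  map_add' := by intros; rfl
  map_smul' := by intros; rfl

noncomputable def ev2 (x y : W) : Module.Dual F W →ₗ[F] F × F where
  toFun φ := (φ x, φ y)
  map_add' := by intros; rfl
  map_smul' := by intros; rfl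

lemma ev1_surj {x : W} (hx : x ≠ 0) : Function.Surjective (ev1 (F := F) x) := by
  obtain ⟨φ₀, hφ₀⟩ := aux_dual_ne (F := F) hx
  intro a
  exact ⟨a • φ₀, by simp [ev1, hφ₀]⟩

lemma ev2_surj {x y : W} (hxy : y ∉ Submodule.span F {x}) (hyx : x ∉ Submodule.span F {y}) :
    Function.Surjective (ev2 (F := F) x y) := by
  obtain ⟨φ₁, hφ₁x, hφ₁y⟩ := aux_dual_pair (F := F) hyx
  obtain ⟨φ₂, hφ₂y, hφ₂x⟩ := aux_dual_pair (F := F) hxy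
  rintro ⟨a, b⟩
  refine ⟨a • φ₁ + b • φ₂, ?_⟩
  simp [ev2, hφ₁x, hφ₁y, hφ₂x, hφ₂y, Prod.ext_iff]

variable [Fintype (Module.Dual F W)]

lemma card_ann1 {x : W} (hx : x ≠ 0) [DecidablePred fun φ : Module.Dual F W => φ x = 0] :
    (Finset.univ.filter (fun φ : Module.Dual F W => φ x = 0)).card
      = Fintype.card F ^ (Module.finrank F W - 1) := by
  have h := aux_card_ker (ev1 (F := F) x) (ev1_surj hx)
  rw [Subspace.dual_finrank_eq, Module.finrank_self] at h
  calc (Finset.univ.filter fun φ : Module.Dual F W => φ x = 0).card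
      = Fintype.card {φ : Module.Dual F W // φ x = 0} := (Fintype.card_subtype _).symm
    _ = Nat.card {φ : Module.Dual F W // φ x = 0} := (Nat.card_eq_fintype_card).symm
    _ = Nat.card {φ : Module.Dual F W // ev1 (F := F) x φ = 0} :=
        Nat.card_congr (Equiv.subtypeEquivRight fun φ => Iff.rfl)
    _ = Fintype.card F ^ (Module.finrank F W - 1) := h

lemma card_ann2 {x y : W} (hxy : y ∉ Submodule.span F {x}) (hyx : x ∉ Submodule.span F {y})
    [DecidablePred fun φ : Module.Dual F W => φ x = 0 ∧ φ y = 0] :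
    (Finset.univ.filter (fun φ : Module.Dual F W => φ x = 0 ∧ φ y = 0)).card
      = Fintype.card F ^ (Module.finrank F W - 2) := by
  have h := aux_card_ker (ev2 (F := F) x y) (ev2_surj hxy hyx)
  rw [Subspace.dual_finrank_eq, Module.finrank_prod, Module.finrank_self] at h
  calc (Finset.univ.filter fun φ : Module.Dual F W => φ x = 0 ∧ φ y = 0).card
      = Fintype.card {φ : Module.Dual F W // φ x = 0 ∧ φ y = 0} := (Fintype.card_subtype _).symm
    _ = Nat.card {φ : Module.Dual F W // φ x = 0 ∧ φ y = 0} := (Nat.card_eq_fintype_card).symm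
    _ = Nat.card {φ : Module.Dual F W // ev2 (F := F) x y φ = 0} :=
        Nat.card_congr (Equiv.subtypeEquivRight fun φ => Prod.mk_eq_zero.symm)
    _ = Fintype.card F ^ (Module.finrank F W - 2) := h
end
lemma exists_minimal_dep {α : Type*} (N : Matroid α) {D : Set α} (hfin : D.Finite) (hD : N.Dep D) :
    ∃ C, C ⊆ D ∧ Minimal (fun X => N.Dep X) C := by
  obtain ⟨m, hm⟩ : ∃ m, D.ncard ≤ m := ⟨D.ncard, le_rfl⟩
  induction m generalizing D with
  | zero =>
    have : D = ∅ := (Set.ncard_eq_zero hfin).1 (Nat.le_zero.1 hm)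
    subst this
    exact absurd N.empty_indep hD.not_indep
  | succ m ih =>
    by_cases h : ∀ X, N.Dep X → X ⊆ D → D ⊆ X
    · exact ⟨D, Subset.rfl, hD, fun X hX hXD => h X hX hXD⟩
    · push_neg at h
      obtain ⟨X, hXdep, hXD, hDX⟩ := h
      have hss : X ⊂ D := ssubset_iff_subset_not_subset.2 ⟨hXD, hDX⟩
      have hcard : X.ncard < D.ncard := Set.ncard_lt_ncard hss hfin
      obtain ⟨C, hCX, hC⟩ := ih (hfin.subset hXD) hXdep (by omega)
      exact ⟨C, hCX.trans hXD, hC⟩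

/-- Let `q` be a prime power, `r ≥ 1`, and `M` a finite simple rank-`r` matroid
representable over `GF(q)` that is not isomorphic to `PG(r-1,q)` (i.e.
`|E(M)| < (q^r - 1)/(q - 1)`), with a positive integer weight function `w`.
If `q·g*_w(M) = (q-1)·w(E(M))`, then `q^{r-1}·w(e) ≤ w(E(M))` for every `e ∈ E(M)`. -/
theorem weighted_cogirth_equality_weight_bound {α : Type*} (M : Matroid α) [M.Finite]
    (hsimple : ∀ e ∈ M.E, ∀ f ∈ M.E, M.Indep {e, f})
    (q r : ℕ) (hr : 1 ≤ r) (hrank : ∃ B, M.IsBase B ∧ B.ncard = r)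
    (F : Type*) [Field F] [Fintype F] (hF : Fintype.card F = q)
    (hrep : M.IsRepresentableOver F)
    (hnotpg : (q - 1) * M.E.ncard < q ^ r - 1)
    (w : α → ℕ) (hw : ∀ e ∈ M.E, 1 ≤ w e)
    (heq : q * M.cogirthW w = (q - 1) * ∑ᶠ e ∈ M.E, w e) :
    ∀ e ∈ M.E, q ^ (r - 1) * w e ≤ ∑ᶠ e ∈ M.E, w e := by
  intro e he
  classical
  obtain ⟨B, hB, hBcard⟩ := hrank
  have hEfin : M.E.Finite := M.ground_finite
  have hq2 : 2 ≤ q := hF ▸ Fintype.one_lt_card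
  obtain ⟨k, hk⟩ : ∃ k, q = k + 1 := ⟨q - 1, by omega⟩
  have hk1 : 1 ≤ k := by omega
  have hq1 : q - 1 = k := by omega
  have hBE : B ⊆ M.E := hB.subset_ground
  have hE1 : 1 ≤ M.E.ncard := by
    have h2 := Set.ncard_le_ncard hBE hEfin
    omega
  -- r ≥ 2 : otherwise `hnotpg` is contradictory
  have hr2 : 2 ≤ r := by
    by_contra hlt
    have hr1 : r = 1 := by omega
    rw [hr1, pow_one, hq1] at hnotpg
    have h2 : k ≤ k * M.E.ncard := Nat.le_mul_of_pos_right k (by omega)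
    exact absurd hnotpg (not_lt.2 h2)
  obtain ⟨n, v, hv⟩ := hrep
  -- rewrite the finsums as finite sums
  rw [finsum_mem_eq_finite_toFinset_sum _ hEfin]
  rw [hq1, finsum_mem_eq_finite_toFinset_sum _ hEfin] at heq
  set Efin := hEfin.toFinset with hEfin2
  have heEfin : e ∈ Efin := hEfin.mem_toFinset.2 he
  -- the span of the ground set
  set W := Submodule.span F (v '' M.E) with hW
  have hmemW : ∀ f ∈ M.E, v f ∈ W := fun f hf => Submodule.subset_span (Set.mem_image_of_mem v hf)
  set u : α → W := fun f => if h : v f ∈ W then ⟨v f, h⟩ else 0 with hu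
  have hucoe : ∀ f ∈ M.E, (u f : Fin n → F) = v f := by
    intro f hf
    simp only [hu]
    rw [dif_pos (hmemW f hf)]
  -- every base of M spans W
  have hbase_span : ∀ B₀, M.IsBase B₀ → Submodule.span F (v '' B₀) = W := by
    intro B₀ hB₀
    refine le_antisymm (Submodule.span_mono (Set.image_mono hB₀.subset_ground)) ?_
    rw [hW]
    refine Submodule.span_le.2 ?_
    rintro x ⟨f, hf, rfl⟩
    by_contra hnot
    have hfB₀ : f ∉ B₀ := fun h => hnot (Submodule.subset_span (Set.mem_image_of_mem v h))
    have hliB : LinearIndependent F (B₀.restrict v) := (hv B₀ hB₀.subset_ground).1 hB₀.indep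
    have hinj : Set.InjOn v B₀ := Set.injOn_iff_injective.2 hliB.injective
    have himg : LinearIndependent F (fun x : ↥(v '' B₀) => (x : Fin n → F)) :=
      (linearIndepOn_iff_image hinj).1 hliB
    have hins : LinearIndependent F (fun x : ↥(insert (v f) (v '' B₀)) => (x : Fin n → F)) :=
      LinearIndepOn.id_insert himg hnot
    have himg2 : v '' (insert f B₀) = insert (v f) (v '' B₀) := Set.image_insert_eq
    have hinj2 : Set.InjOn v (insert f B₀) :=
      (Set.injOn_insert hfB₀).2 ⟨hinj, fun hmem => hnot (Submodule.subset_span hmem)⟩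
    have hli2 : LinearIndependent F ((insert f B₀).restrict v) :=
      (linearIndepOn_iff_image hinj2).2 (by rw [himg2]; exact hins)
    have hindep : M.Indep (insert f B₀) :=
      (hv _ (Set.insert_subset hf hB₀.subset_ground)).2 hli2
    exact (hB₀.insert_dep ⟨hf, hfB₀⟩).not_indep hindep
  -- W has dimension r
  have hBfin : B.Finite := hEfin.subset hBE
  have hliB : LinearIndependent F (B.restrict v) := (hv B hBE).1 hB.indep
  have hinjB : Set.InjOn v B := Set.injOn_iff_injective.2 hliB.injective
  haveI : Fintype ↥(v '' B) := (hBfin.image v).fintype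
  have hWrank : Module.finrank F W = r := by
    rw [← hbase_span B hB, finrank_span_set_eq_card ((linearIndepOn_iff_image hinjB).1 hliB)]
    rw [← Set.ncard_eq_toFinset_card', Set.ncard_image_of_injOn hinjB, hBcard]
  haveI : Finite (Module.Dual F W) :=
    Finite.of_injective _ (DFunLike.coe_injective (F := Module.Dual F W))
  haveI : Fintype (Module.Dual F W) := Fintype.ofFinite _
  -- each element of the ground set is mapped to a nonzero vector
  have hvnz : ∀ f ∈ M.E, u f ≠ 0 := by
    intro f hf hzero
    have h1 : M.Indep {f} := by
      have := hsimple f hf f hf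
      rwa [Set.pair_eq_singleton] at this
    have h2 : LinearIndependent F (({f} : Set α).restrict v) :=
      (hv _ (Set.singleton_subset_iff.2 hf)).1 h1
    have h3 := h2.ne_zero ⟨f, rfl⟩
    apply h3
    show v f = 0
    rw [← hucoe f hf, hzero]
    rfl
  -- non-parallel facts
  have hpairspan : ∀ f ∈ M.E, f ≠ e →
      u f ∉ Submodule.span F {u e} ∧ u e ∉ Submodule.span F {u f} := by
    intro f hf hne
    have hpair : M.Indep {e, f} := hsimple e he f hf
    have hsub : ({e, f} : Set α) ⊆ M.E := by
      rw [Set.insert_subset_iff, Set.singleton_subset_iff]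
      exact ⟨he, hf⟩
    have hli : LinearIndependent F (({e, f} : Set α).restrict v) := (hv _ hsub).1 hpair
    have hinj : Set.InjOn v {e, f} := Set.injOn_iff_injective.2 hli.injective
    have himg : LinearIndependent F (fun x : ↥(v '' ({e, f} : Set α)) => (x : Fin n → F)) :=
      (linearIndepOn_iff_image hinj).1 hli
    rw [Set.image_pair] at himg
    have hvfe : v f ≠ v e := fun hcontra =>
      hne (hinj (by simp) (by simp) hcontra)
    have hs1 : v f ∉ Submodule.span F {v e} := by
      have h1 : LinearIndependent F
          (fun x : ↥(insert (v f) ({v e} : Set (Fin n → F))) => (x : Fin n → F)) := by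
        rwa [show ({v e, v f} : Set (Fin n → F)) = insert (v f) {v e} from Set.pair_comm _ _]
          at himg
      exact ((linearIndepOn_id_insert (by simpa using hvfe)).1 h1).2
    have hs2 : v e ∉ Submodule.span F {v f} := by
      exact ((linearIndepOn_id_insert (by simpa using hvfe.symm)).1 himg).2
    constructor
    · intro hmem
      obtain ⟨c, hc⟩ := Submodule.mem_span_singleton.1 hmem
      apply hs1
      have hcoe : v f = c • v e := by
        calc v f = (u f : Fin n → F) := (hucoe f hf).symm
          _ = ((c • u e : W) : Fin n → F) := by rw [hc]
          _ = c • (u e : Fin n → F) := rfl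
          _ = c • v e := by rw [hucoe e he]
      rw [hcoe]
      exact Submodule.smul_mem _ c (Submodule.mem_span_singleton_self _)
    · intro hmem
      obtain ⟨c, hc⟩ := Submodule.mem_span_singleton.1 hmem
      apply hs2
      have hcoe : v e = c • v f := by
        calc v e = (u e : Fin n → F) := (hucoe e he).symm
          _ = ((c • u f : W) : Fin n → F) := by rw [hc]
          _ = c • (u f : Fin n → F) := rfl
          _ = c • v f := by rw [hucoe f hf]
      rw [hcoe]
      exact Submodule.smul_mem _ c (Submodule.mem_span_singleton_self _)
  -- the key per-hyperplane bound
  have key : ∀ φ : Module.Dual F W, φ ≠ 0 →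
      q * ∑ f ∈ Efin.filter (fun f => φ (u f) = 0), w f ≤ ∑ f ∈ Efin, w f := by
    intro φ hφ
    set Hfin := Efin.filter (fun f => φ (u f) = 0) with hHfin
    have hnobase : ∀ B₀, M.IsBase B₀ → ¬ (B₀ ⊆ (↑Hfin : Set α)) := by
      intro B₀ hB₀ hsubH
      apply hφ
      have hspan : Submodule.span F (u '' B₀) = (⊤ : Submodule F ↥W) := by
        apply Submodule.map_injective_of_injective (Submodule.injective_subtype W)
        rw [Submodule.map_span, Submodule.map_top, Submodule.range_subtype]
        rw [← Set.image_comp]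
        have himg : (W.subtype ∘ u) '' B₀ = v '' B₀ :=
          Set.image_congr fun f hf => hucoe f (hB₀.subset_ground hf)
        rw [himg, hbase_span B₀ hB₀]
      apply LinearMap.ext
      intro x
      have hx : x ∈ Submodule.span F (u '' B₀) := hspan ▸ Submodule.mem_top
      have hgen : u '' B₀ ⊆ (LinearMap.ker φ : Set ↥W) := by
        rintro _ ⟨f, hf, rfl⟩
        have hfH : f ∈ Hfin := Finset.mem_coe.1 (hsubH hf)
        exact (Finset.mem_filter.1 hfH).2
      exact Submodule.span_le.2 hgen hx
    have hdep : M✶.Dep (M.E \ (↑Hfin : Set α)) := by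
      rw [Matroid.dual_dep_iff_forall]
      refine ⟨fun B₀ hB₀ => ?_, Set.diff_subset⟩
      obtain ⟨x, hxB₀, hxH⟩ := Set.not_subset.1 (hnobase B₀ hB₀)
      exact ⟨x, ⟨hB₀.subset_ground hxB₀, hxH⟩, hxB₀⟩
    obtain ⟨C, hCsub, hCmin⟩ := exists_minimal_dep M✶ (hEfin.subset Set.diff_subset) hdep
    have hCfin : C.Finite := (hEfin.subset Set.diff_subset).subset hCsub
    have h1 : M.cogirthW w ≤ ∑ᶠ x ∈ C, w x := Nat.sInf_le ⟨C, hCmin, rfl⟩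
    rw [finsum_mem_eq_finite_toFinset_sum _ hCfin] at h1
    have h2 : ∑ x ∈ hCfin.toFinset, w x ≤ ∑ f ∈ Efin.filter (fun f => ¬ φ (u f) = 0), w f := by
      apply Finset.sum_le_sum_of_subset
      intro x hx
      have hxC : x ∈ C := hCfin.mem_toFinset.1 hx
      have hxE := hCsub hxC
      rw [Finset.mem_filter]
      refine ⟨hEfin.mem_toFinset.2 hxE.1, fun hc => hxE.2 ?_⟩
      exact Finset.mem_coe.2 (Finset.mem_filter.2 ⟨hEfin.mem_toFinset.2 hxE.1, hc⟩)
    have h3 : ∑ f ∈ Hfin, w f + ∑ f ∈ Efin.filter (fun f => ¬ φ (u f) = 0), w f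
        = ∑ f ∈ Efin, w f := Finset.sum_filter_add_sum_filter_not _ _ _
    have hcog : k * ∑ f ∈ Efin, w f ≤ q * ∑ f ∈ Efin.filter (fun f => ¬ φ (u f) = 0), w f := by
      rw [← heq]
      exact Nat.mul_le_mul_left q (h1.trans h2)
    set s := ∑ f ∈ Efin, w f with hs
    set a := ∑ f ∈ Hfin, w f with ha
    set b := ∑ f ∈ Efin.filter (fun f => ¬ φ (u f) = 0), w f with hb
    have e1 : q * b = k * b + b := by rw [hk, add_mul, one_mul]
    have e2 : k * s = k * a + k * b := by rw [← h3, mul_add]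
    have e3 : k * a ≤ b := by linarith
    have e4 : q * a = k * a + a := by rw [hk, add_mul, one_mul]
    linarith
  -- the double count
  set A := Finset.univ.filter (fun φ : Module.Dual F W => φ (u e) = 0) with hA
  have h0A : (0 : Module.Dual F W) ∈ A :=
    Finset.mem_filter.2 ⟨Finset.mem_univ _, LinearMap.zero_apply _⟩
  have hAcard : A.card = q ^ (r - 1) := by
    rw [hA, card_ann1 (hvnz e he), hWrank, hF]
  have hpaircard : ∀ f ∈ Efin.erase e,
      (A.filter (fun φ => φ (u f) = 0)).card = q ^ (r - 2) := by
    intro f hfmem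
    have hne : f ≠ e := Finset.ne_of_mem_erase hfmem
    have hf : f ∈ M.E := hEfin.mem_toFinset.1 (Finset.mem_of_mem_erase hfmem)
    obtain ⟨h1, h2⟩ := hpairspan f hf hne
    rw [hA, Finset.filter_filter, card_ann2 h1 h2, hWrank, hF]
  set s := ∑ f ∈ Efin, w f with hs
  set T := ∑ f ∈ Efin.erase e, w f with hT
  have hse : w e + T = s := Finset.add_sum_erase _ _ heEfin
  set S := ∑ φ ∈ A, ∑ f ∈ Efin.filter (fun f => φ (u f) = 0), w f with hS
  have hcount : S = q ^ (r - 1) * w e + q ^ (r - 2) * T := by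
    rw [hS]
    have hfe : (A.filter (fun φ => φ (u e) = 0)) = A :=
      Finset.filter_true_of_mem (fun φ hφ => (Finset.mem_filter.1 hφ).2)
    calc ∑ φ ∈ A, ∑ f ∈ Efin.filter (fun f => φ (u f) = 0), w f
        = ∑ φ ∈ A, ∑ f ∈ Efin, if φ (u f) = 0 then w f else 0 :=
          Finset.sum_congr rfl fun φ _ => Finset.sum_filter _ _
      _ = ∑ f ∈ Efin, ∑ φ ∈ A, if φ (u f) = 0 then w f else 0 := Finset.sum_comm
      _ = ∑ f ∈ Efin, (A.filter (fun φ => φ (u f) = 0)).card * w f :=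
          Finset.sum_congr rfl fun f _ => by
            rw [← Finset.sum_filter, Finset.sum_const, smul_eq_mul]
      _ = (A.filter (fun φ => φ (u e) = 0)).card * w e
            + ∑ f ∈ Efin.erase e, (A.filter (fun φ => φ (u f) = 0)).card * w f :=
          (Finset.add_sum_erase _ _ heEfin).symm
      _ = q ^ (r - 1) * w e + q ^ (r - 2) * T := by
          rw [hfe, hAcard, hT, Finset.mul_sum]
          congr 1
          exact Finset.sum_congr rfl fun f hf => by rw [hpaircard f hf]
  have hzero : Efin.filter (fun f => (0 : Module.Dual F W) (u f) = 0) = Efin :=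
    Finset.filter_true_of_mem (fun f _ => LinearMap.zero_apply _)
  have hbound : q * S ≤ q * s + (A.erase 0).card * s := by
    have hsplit : S = s + ∑ φ ∈ A.erase 0, ∑ f ∈ Efin.filter (fun f => φ (u f) = 0), w f := by
      rw [hS]
      conv_lhs => rw [← Finset.insert_erase h0A]
      rw [Finset.sum_insert (Finset.notMem_erase _ _), hzero, ← hs]
    rw [hsplit, mul_add]
    refine Nat.add_le_add_left ?_ _
    calc q * ∑ φ ∈ A.erase 0, ∑ f ∈ Efin.filter (fun f => φ (u f) = 0), w f
        = ∑ φ ∈ A.erase 0, q * ∑ f ∈ Efin.filter (fun f => φ (u f) = 0), w f :=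
          Finset.mul_sum _ _ _
      _ ≤ ∑ _φ ∈ A.erase 0, s :=
          Finset.sum_le_sum fun φ hφ => key φ (Finset.ne_of_mem_erase hφ)
      _ = (A.erase 0).card * s := by rw [Finset.sum_const, smul_eq_mul]
  have hcerase : (A.erase 0).card + 1 = q ^ (r - 1) := by
    rw [Finset.card_erase_of_mem h0A, ← hAcard]
    have hpos : 1 ≤ A.card := Finset.card_pos.2 ⟨0, h0A⟩
    omega
  have hpow : q ^ (r - 1) = q * q ^ (r - 2) := by
    rw [← pow_succ']
    congr 1
    omega
  -- final arithmetic
  have m1 : q * S = q * (q ^ (r - 1) * w e) + q ^ (r - 1) * T := by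
    rw [hcount, mul_add, hpow]
    ring
  have m2 : (A.erase 0).card * s + s = q ^ (r - 1) * s := by
    rw [← hcerase, add_mul, one_mul]
  have m3 : q ^ (r - 1) * s = q ^ (r - 1) * w e + q ^ (r - 1) * T := by
    rw [← hse, mul_add]
  have m4 : q * (q ^ (r - 1) * w e) + s ≤ q * s + q ^ (r - 1) * w e := by
    have hb2 := hbound
    rw [m1] at hb2
    linarith
  have e1 : q * (q ^ (r - 1) * w e) = k * (q ^ (r - 1) * w e) + q ^ (r - 1) * w e := by
    rw [hk, add_mul, one_mul]
  have e2 : q * s = k * s + s := by rw [hk, add_mul, one_mul]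
  have m5 : k * (q ^ (r - 1) * w e) ≤ k * s := by linarith
  exact Nat.le_of_mul_le_mul_left m5 (by omega)
end

section
/- Let F be a finite field with |F| = q and let V be an F-vector space of finite dimension r ≥ 1. Let w : ℙ(V) → ℕ satisfy w(p) ≥ 1 for all projective points p. Then q^{r−1}·(q − 1)·w(ℙ(V)) ≥ (q^r − 1)·g*_w(ℙ(V)), where g*_w(ℙ(V)) = min over linear hyperplanes H of V of w(ℙ(V) ∖ pts(H)). -/
open Set Module

section Aux

variable {F V : Type*} [Field F] [Fintype F] [AddCommGroup V] [Module F V]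
  [FiniteDimensional F V]

open scoped Classical in
/-- A nonzero vector is not killed by exactly `q^r - q^(r-1)` functionals. -/
lemma aux_card_ne_zero (v : V) (hv : v ≠ 0) (q r : ℕ) (hq : Fintype.card F = q)
    (hr : finrank F V = r) [Fintype (Module.Dual F V)]
    [DecidablePred (fun φ : Module.Dual F V => φ v ≠ 0)]
    [DecidablePred (fun φ : Module.Dual F V => φ v = 0)] :
    (Finset.univ.filter (fun φ : Module.Dual F V => φ v ≠ 0)).card = q ^ r - q ^ (r - 1) := by
  have hev : Module.Dual.eval F V v ≠ 0 := by
    intro h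
    apply hv
    rw [← Module.forall_dual_apply_eq_zero_iff F]
    intro φ
    have := DFunLike.congr_fun h φ
    simpa using this
  have hkerrank : finrank F (LinearMap.ker (Module.Dual.eval F V v)) = r - 1 := by
    have h1 := Module.Dual.finrank_ker_add_one_of_ne_zero hev
    rw [Subspace.dual_finrank_eq, hr] at h1
    omega
  have hcardD : Fintype.card (Module.Dual F V) = q ^ r := by
    rw [card_eq_pow_finrank (K := F), hq, Subspace.dual_finrank_eq, hr]
  have hcardker : Fintype.card (LinearMap.ker (Module.Dual.eval F V v)) = q ^ (r - 1) := by
    rw [card_eq_pow_finrank (K := F), hq, hkerrank]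
  have h0 : Fintype.card {φ : Module.Dual F V // φ v = 0} = q ^ (r - 1) := by
    rw [← hcardker]
    apply Fintype.card_congr
    exact Equiv.subtypeEquivRight (by intro φ; simp [LinearMap.mem_ker])
  rw [← Fintype.card_subtype, Fintype.card_subtype_compl, hcardD, h0]

end Aux

/-- Cogirth bound for the full projective geometry `PG(r-1,q)`: for any positive weight
function `w` on `ℙ(V)`, `q^{r-1}·(q-1)·w(ℙ(V)) ≥ (q^r - 1)·g*_w(ℙ(V))`. -/
theorem proj_geometry_weighted_cogirth_bound {F V : Type*} [Field F] [Fintype F]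
    [AddCommGroup V] [Module F V] [FiniteDimensional F V]
    (q r : ℕ) (hq : Fintype.card F = q) (hr : finrank F V = r) (hr1 : 1 ≤ r)
    (w : Projectivization F V → ℕ) (hw : ∀ p, 1 ≤ w p) :
    (q ^ r - 1) * projCogirthW (Set.univ : Set (Projectivization F V)) w ≤
      q ^ (r - 1) * (q - 1) * projWeight (Set.univ : Set (Projectivization F V)) w := by
  classical
  haveI hfinV : Finite V := Module.finite_of_finite F
  haveI : Finite (Module.Dual F V) := Module.finite_of_finite F
  haveI : Finite (Projectivization F V) := Quotient.finite _
  letI : Fintype V := Fintype.ofFinite V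
  letI : Fintype (Module.Dual F V) := Fintype.ofFinite _
  letI : Fintype (Projectivization F V) := Fintype.ofFinite _
  set g := projCogirthW (Set.univ : Set (Projectivization F V)) w with hg
  set Wt := projWeight (Set.univ : Set (Projectivization F V)) w with hWt
  set Φ : Finset (Module.Dual F V) := Finset.univ.filter (fun φ => φ ≠ 0) with hΦ
  -- cardinality of Φ
  have hcardD : Fintype.card (Module.Dual F V) = q ^ r := by
    rw [card_eq_pow_finrank (K := F), hq, Subspace.dual_finrank_eq, hr]
  have hΦcard : Φ.card = q ^ r - 1 := by
    have := Finset.card_filter_add_card_filter_not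
      (s := (Finset.univ : Finset (Module.Dual F V)))
      (p := fun φ : Module.Dual F V => φ ≠ 0)
    rw [Finset.card_univ, hcardD, ← hΦ] at this
    have h1 : (Finset.univ.filter (fun φ : Module.Dual F V => ¬ φ ≠ 0)).card = 1 := by
      rw [← Fintype.card_subtype]
      simp only [not_not]
      exact Fintype.card_subtype_eq (0 : Module.Dual F V)
    omega
  -- expressing each cocircuit weight as a Finset sum
  have hweight : ∀ φ : Module.Dual F V,
      projWeight (Set.univ \ projPts (LinearMap.ker φ)) w
        = ∑ p ∈ Finset.univ.filter (fun p : Projectivization F V => φ p.rep ≠ 0), w p := by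
    intro φ
    have hset : (Set.univ \ projPts (LinearMap.ker φ) : Set (Projectivization F V))
        = ↑(Finset.univ.filter (fun p : Projectivization F V => φ p.rep ≠ 0)) := by
      ext p
      simp only [Set.mem_diff, Set.mem_univ, true_and, projPts, Set.mem_setOf_eq,
        Finset.coe_filter, Finset.mem_univ]
      rw [Projectivization.submodule_eq, Submodule.span_singleton_le_iff_mem,
        LinearMap.mem_ker]
    rw [projWeight, hset, finsum_mem_coe_finset]
  -- each cocircuit weight is at least g
  have hglb : ∀ φ ∈ Φ, g ≤ projWeight (Set.univ \ projPts (LinearMap.ker φ)) w := by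
    intro φ hφ
    rw [hΦ, Finset.mem_filter] at hφ
    apply Nat.sInf_le
    refine ⟨LinearMap.ker φ, ?_, rfl⟩
    have := Module.Dual.finrank_ker_add_one_of_ne_zero hφ.2
    omega
  -- double counting
  have hdouble : ∑ φ ∈ Φ, projWeight (Set.univ \ projPts (LinearMap.ker φ)) w
      = (q ^ r - q ^ (r - 1)) * Wt := by
    calc ∑ φ ∈ Φ, projWeight (Set.univ \ projPts (LinearMap.ker φ)) w
        = ∑ φ ∈ Φ, ∑ p : Projectivization F V, if φ p.rep ≠ 0 then w p else 0 := by
          refine Finset.sum_congr rfl fun φ _ => ?_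
          rw [hweight φ, Finset.sum_filter]
      _ = ∑ p : Projectivization F V, ∑ φ ∈ Φ, if φ p.rep ≠ 0 then w p else 0 :=
          Finset.sum_comm
      _ = ∑ p : Projectivization F V, (q ^ r - q ^ (r - 1)) * w p := by
          refine Finset.sum_congr rfl fun p _ => ?_
          rw [← Finset.sum_filter]
          have hfil : Φ.filter (fun φ => φ p.rep ≠ 0)
              = Finset.univ.filter (fun φ : Module.Dual F V => φ p.rep ≠ 0) := by
            rw [hΦ, Finset.filter_filter]
            apply Finset.filter_congr
            intro φ _
            constructor
            · exact fun h => h.2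
            · intro h; exact ⟨fun h0 => h (by rw [h0]; simp), h⟩
          rw [hfil, Finset.sum_const,
            aux_card_ne_zero p.rep p.rep_nonzero q r hq hr, smul_eq_mul]
      _ = (q ^ r - q ^ (r - 1)) * Wt := by
          rw [← Finset.mul_sum, hWt, projWeight]
          congr 1
          rw [← finsum_mem_coe_finset]
          simp
  -- putting it together
  have hmain : Φ.card * g ≤ (q ^ r - q ^ (r - 1)) * Wt := by
    rw [← hdouble]
    calc Φ.card * g = ∑ _φ ∈ Φ, g := by rw [Finset.sum_const, smul_eq_mul]
      _ ≤ ∑ φ ∈ Φ, projWeight (Set.univ \ projPts (LinearMap.ker φ)) w :=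
          Finset.sum_le_sum hglb
  rw [hΦcard] at hmain
  have hpow : q ^ (r - 1) * (q - 1) = q ^ r - q ^ (r - 1) := by
    rw [Nat.mul_sub, mul_one, ← pow_succ]
    congr 2
    omega
  rw [hpow]
  linarith [hmain]
end
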